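/- arXiv:1712.08559 — 6 statements merged into one kernel-verified Lean document; each statement's English description precedes it below -/
import Mathlib

section
/- (Shapley-Folkman) Let V_1, ..., V_n be arbitrary subsets of R^d. If x belongs to the convex hull of the Minkowski sum V_1 + ... + V_n, then there exists a subset S of {1,...,n} with |S| <= d such that x belongs to the Minkowski sum of V_i over i not in S plus the Minkowski sum of Co(V_i) over i in S. -/
open scoped Pointwise
open Finset

/-- A fiberwise convex-combination representation of `x` over the sets `V i`. -/
def SFRep (d n : ℕ) (V : Fin n → Set (Fin d → ℝ)) (x : Fin d → ℝ)
    (T : Fin n → Finset (Fin d → ℝ)) (c : Fin n → (Fin d → ℝ) → ℝ) : Prop :=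
  (∀ i, ∀ v ∈ T i, 0 < c i v) ∧ (∀ i, ↑(T i) ⊆ V i) ∧
  (∀ i, ∑ v ∈ T i, c i v = 1) ∧ (∑ i, ∑ v ∈ T i, c i v • v) = x

lemma sf_exists_rep (d n : ℕ) (V : Fin n → Set (Fin d → ℝ)) (x : Fin d → ℝ)
    (hx : x ∈ convexHull ℝ (∑ i, V i)) :
    ∃ T c, SFRep d n V x T c := by
  classical
  rw [convexHull_sum] at hx
  rw [Set.mem_fintype_sum] at hx
  obtain ⟨y, hy, hxy⟩ := hx
  have h1 : ∀ i, ∃ (t : Finset (Fin d → ℝ)) (w : (Fin d → ℝ) → ℝ),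
      (∀ v ∈ t, 0 ≤ w v) ∧ (↑t ⊆ V i) ∧ (∑ v ∈ t, w v = 1) ∧ ∑ v ∈ t, w v • v = y i := by
    intro i
    have := hy i
    rw [convexHull_eq_union_convexHull_finite_subsets] at this
    obtain ⟨t, ht, hmem⟩ := by simpa using this
    rw [Finset.mem_convexHull] at hmem
    obtain ⟨w, hw0, hw1, hwc⟩ := hmem
    refine ⟨t, w, hw0, ht, hw1, ?_⟩
    rw [Finset.centerMass_eq_of_sum_1 _ _ hw1] at hwc
    simpa using hwc
  choose t w hw0 htV hw1 hws using h1
  refine ⟨fun i => (t i).filter (fun v => 0 < w i v), w, ?_, ?_, ?_, ?_⟩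
  · intro i v hv; exact (mem_filter.mp hv).2
  · intro i v hv
    exact htV i (filter_subset _ _ (by exact_mod_cast hv))
  · intro i
    rw [Finset.sum_filter_of_ne]
    · exact hw1 i
    · intro v hv hne; exact lt_of_le_of_ne (hw0 i v hv) (Ne.symm hne)
  · have : ∀ i, ∑ v ∈ (t i).filter (fun v => 0 < w i v), w i v • v = ∑ v ∈ t i, w i v • v := by
      intro i
      apply Finset.sum_filter_of_ne
      intro v hv hne
      have : w i v ≠ 0 := fun h => hne (by simp [h])
      exact lt_of_le_of_ne (hw0 i v hv) (Ne.symm this)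
    simp_rw [this, hws]
    exact hxy

lemma sf_reduce (d n : ℕ) (V : Fin n → Set (Fin d → ℝ)) (x : Fin d → ℝ)
    (T : Fin n → Finset (Fin d → ℝ)) (c : Fin n → (Fin d → ℝ) → ℝ)
    (h : SFRep d n V x T c) (hN : n + d < ∑ i, (T i).card) :
    ∃ T' c', SFRep d n V x T' c' ∧ ∑ i, (T' i).card < ∑ i, (T i).card := by
  classical
  obtain ⟨hpos, hV, hone, hsum⟩ := h
  set M := (Fin d → ℝ) × (Fin n → ℝ)
  set φ : Fin n → (Fin d → ℝ) → M := fun i v => (v, Pi.single i 1) with hφ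
  have φinj : ∀ i, Function.Injective (φ i) := by
    intro i v w hvw
    exact congrArg Prod.fst hvw
  have hsingle : ∀ i j : Fin n, (Pi.single i (1:ℝ) : Fin n → ℝ) = Pi.single j 1 → i = j := by
    intro i j hij
    by_contra hne
    have := congrFun hij i
    rw [Pi.single_eq_same, Pi.single_eq_of_ne hne] at this
    exact one_ne_zero this
  set t : Finset M := univ.biUnion (fun i => (T i).image (φ i)) with ht
  have hdisj : ∀ i ∈ (univ : Finset (Fin n)), ∀ j ∈ univ, i ≠ j →
      Disjoint ((T i).image (φ i)) ((T j).image (φ j)) := by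
    intro i _ j _ hij
    rw [Finset.disjoint_left]
    rintro a ha hb
    obtain ⟨v, _, rfl⟩ := mem_image.mp ha
    obtain ⟨u, _, hu⟩ := mem_image.mp hb
    exact hij (hsingle j i (congrArg Prod.snd hu)).symm
  have hcard : t.card = ∑ i, (T i).card := by
    rw [ht, card_biUnion hdisj]
    congr 1; ext i
    exact card_image_of_injective _ (φinj i)
  have hrank : Module.finrank ℝ M < t.card := by
    rw [hcard]
    have : Module.finrank ℝ M = d + n := by
      simp [M, Module.finrank_prod, Module.finrank_fintype_fun_eq_card]
    omega
  obtain ⟨f, hf0, e₀, he₀t, hfe₀⟩ := Module.exists_nontrivial_relation_of_finrank_lt_card hrank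
  set g : Fin n → (Fin d → ℝ) → ℝ := fun i v => f (φ i v) with hg
  have hsplit : ∑ i, ∑ v ∈ T i, g i v • (φ i v) = 0 := by
    rw [← hf0, ht, sum_biUnion (fun i _ j _ hij => hdisj i (mem_univ i) j (mem_univ j) hij)]
    exact Finset.sum_congr rfl fun i _ => ((Finset.sum_image (f := fun e : M => f e • e) (fun a _ b _ hab => φinj i hab)).symm)
  -- first component
  have ha : ∑ i, ∑ v ∈ T i, g i v • v = 0 := by
    have h1 := congrArg (⇑(LinearMap.fst ℝ (Fin d → ℝ) (Fin n → ℝ))) hsplit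
    simpa only [map_sum, map_smul, LinearMap.fst_apply, map_zero] using h1
  -- second component, fiber sums
  have hb : ∑ i, ∑ v ∈ T i, g i v • (Pi.single i (1:ℝ) : Fin n → ℝ) = 0 := by
    have h1 := congrArg (⇑(LinearMap.snd ℝ (Fin d → ℝ) (Fin n → ℝ))) hsplit
    simpa only [map_sum, map_smul, LinearMap.snd_apply, map_zero] using h1
  have hfib : ∀ j, ∑ v ∈ T j, g j v = 0 := by
    intro j
    have h3 := congrFun hb j
    simp only [Finset.sum_apply, Pi.smul_apply, Pi.single_apply, smul_eq_mul, mul_ite, mul_one,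
      mul_zero, Pi.zero_apply, Finset.sum_ite_irrel, Finset.sum_const_zero,
      Finset.sum_ite_eq, mem_univ, if_true] at h3
    exact h3
  -- there is a strictly negative coefficient
  obtain ⟨i₀, v₀, hv₀, hgneg⟩ : ∃ i₀ v₀, v₀ ∈ T i₀ ∧ g i₀ v₀ < 0 := by
    obtain ⟨i₁, hi₁⟩ := mem_biUnion.mp he₀t
    obtain ⟨v₁, hv₁, rfl⟩ := mem_image.mp hi₁.2
    rcases lt_or_gt_of_ne hfe₀ with hlt | hgt
    · exact ⟨i₁, v₁, hv₁, hlt⟩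
    · by_contra hall
      push_neg at hall
      have hge : ∀ v ∈ T i₁, 0 ≤ g i₁ v := fun v hv => hall i₁ v hv
      have := Finset.single_le_sum hge hv₁
      rw [hfib i₁] at this
      exact absurd (lt_of_lt_of_le hgt this) (lt_irrefl _)
  -- minimum ratio
  set P : Finset ((_ : Fin n) × (Fin d → ℝ)) :=
    (univ.sigma (fun i => T i)).filter (fun p => g p.1 p.2 < 0) with hP
  have hPne : P.Nonempty := ⟨⟨i₀, v₀⟩, by simp [hP, Finset.mem_sigma, hv₀, hgneg]⟩
  obtain ⟨ph, hphP, hphmin⟩ := Finset.exists_min_image P (fun p => c p.1 p.2 / (-(g p.1 p.2))) hPne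
  have hphmem : ph.2 ∈ T ph.1 := (Finset.mem_sigma.mp (Finset.mem_filter.mp hphP).1).2
  have hphneg : g ph.1 ph.2 < 0 := (Finset.mem_filter.mp hphP).2
  set r : ℝ := c ph.1 ph.2 / (-(g ph.1 ph.2)) with hr
  have hrpos : 0 < r := div_pos (hpos _ _ hphmem) (neg_pos.mpr hphneg)
  set c' : Fin n → (Fin d → ℝ) → ℝ := fun i v => c i v + r * g i v with hc'
  have hnonneg : ∀ i, ∀ v ∈ T i, 0 ≤ c' i v := by
    intro i v hv
    rcases le_or_gt 0 (g i v) with hg0 | hg0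
    · have : 0 ≤ r * g i v := mul_nonneg hrpos.le hg0
      have := hpos i v hv
      simp only [hc']; linarith
    · have hmemP : (⟨i, v⟩ : (_ : Fin n) × (Fin d → ℝ)) ∈ P := by
        simp [hP, Finset.mem_sigma, hv, hg0]
      have hle := hphmin ⟨i, v⟩ hmemP
      have hngpos : 0 < -(g i v) := neg_pos.mpr hg0
      rw [le_div_iff₀ hngpos] at hle
      simp only [hc']; nlinarith
  have hzero : c' ph.1 ph.2 = 0 := by
    have hgne : g ph.1 ph.2 ≠ 0 := ne_of_lt hphneg
    simp only [hc', hr]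
    rw [div_mul_eq_mul_div, mul_div_assoc, div_neg, div_self hgne]
    ring
  set T' : Fin n → Finset (Fin d → ℝ) := fun i => (T i).filter (fun v => 0 < c' i v) with hT'
  have hsub : ∀ i, T' i ⊆ T i := fun i => filter_subset _ _
  refine ⟨T', c', ⟨?_, ?_, ?_, ?_⟩, ?_⟩
  · intro i v hv; exact (mem_filter.mp hv).2
  · intro i v hv; exact hV i (hsub i (by exact_mod_cast hv))
  · intro i
    rw [Finset.sum_filter_of_ne (fun v hv hne => lt_of_le_of_ne (hnonneg i v hv) (Ne.symm hne))]
    simp only [hc']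
    rw [Finset.sum_add_distrib, hone i, ← Finset.mul_sum, hfib i, mul_zero, add_zero]
  · have heq : ∀ i, ∑ v ∈ T' i, c' i v • v = ∑ v ∈ T i, c' i v • v := by
      intro i
      apply Finset.sum_filter_of_ne
      intro v hv hne
      have : c' i v ≠ 0 := fun h => hne (by simp [h])
      exact lt_of_le_of_ne (hnonneg i v hv) (Ne.symm this)
    simp_rw [heq]
    have : ∀ i, ∑ v ∈ T i, c' i v • v
        = (∑ v ∈ T i, c i v • v) + r • (∑ v ∈ T i, g i v • v) := by
      intro i
      rw [Finset.smul_sum, ← Finset.sum_add_distrib]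
      apply Finset.sum_congr rfl
      intro v _
      simp only [hc']
      rw [add_smul, mul_smul]
    simp_rw [this]
    rw [Finset.sum_add_distrib, hsum, ← Finset.smul_sum, ha, smul_zero, add_zero]
  · apply Finset.sum_lt_sum
    · intro i _
      exact card_le_card (hsub i)
    · refine ⟨ph.1, mem_univ _, ?_⟩
      apply card_lt_card
      rw [Finset.ssubset_iff_of_subset (hsub ph.1)]
      exact ⟨ph.2, hphmem, by simp [hT', hzero]⟩

lemma sf_small (d n : ℕ) (V : Fin n → Set (Fin d → ℝ)) (x : Fin d → ℝ) :
    ∀ (N : ℕ) (T : Fin n → Finset (Fin d → ℝ)) (c : Fin n → (Fin d → ℝ) → ℝ),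
      ∑ i, (T i).card ≤ N → SFRep d n V x T c →
      ∃ T' c', SFRep d n V x T' c' ∧ ∑ i, (T' i).card ≤ n + d := by
  intro N
  induction N with
  | zero =>
    intro T c hle h
    exact ⟨T, c, h, by omega⟩
  | succ N ih =>
    intro T c hle h
    by_cases hc : ∑ i, (T i).card ≤ n + d
    · exact ⟨T, c, h, hc⟩
    · obtain ⟨T', c', h', hlt⟩ := sf_reduce d n V x T c h (by omega)
      exact ih T' c' (by omega) h'

/-- The Shapley–Folkman theorem: if `x` lies in the convex hull of the Minkowski sum
`V₁ + ⋯ + Vₙ` of subsets of `ℝᵈ`, then there is a set `S` of at most `d` indices such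
that `x ∈ ∑_{i ∉ S} Vᵢ + ∑_{i ∈ S} Co(Vᵢ)`. -/
theorem shapley_folkman (d n : ℕ) (V : Fin n → Set (Fin d → ℝ)) (x : Fin d → ℝ)
    (hx : x ∈ convexHull ℝ (∑ i, V i)) :
    ∃ S : Finset (Fin n), S.card ≤ d ∧
      ∃ w : Fin n → (Fin d → ℝ),
        (∀ i ∉ S, w i ∈ V i) ∧ (∀ i ∈ S, w i ∈ convexHull ℝ (V i)) ∧
        x = ∑ i, w i := by
  classical
  obtain ⟨T₀, c₀, h₀⟩ := sf_exists_rep d n V x hx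
  obtain ⟨T, c, h, hsize⟩ := sf_small d n V x (∑ i, (T₀ i).card) T₀ c₀ le_rfl h₀
  obtain ⟨hpos, hV, hone, hsum⟩ := h
  have hne : ∀ i, (T i).Nonempty := by
    intro i
    rw [Finset.nonempty_iff_ne_empty]
    intro hemp
    have := hone i
    rw [hemp, Finset.sum_empty] at this
    exact one_ne_zero this.symm
  have hcard1 : ∀ i, 1 ≤ (T i).card := fun i => Finset.card_pos.mpr (hne i)
  set S : Finset (Fin n) := univ.filter (fun i => 2 ≤ (T i).card) with hS
  have hSd : S.card ≤ d := by
    have key : ∑ i, ((T i).card - 1) ≤ d := by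
      have h1 : ∑ i, (T i).card = ∑ i, (((T i).card - 1) + 1) :=
        Finset.sum_congr rfl fun i _ => by have := hcard1 i; omega
      rw [h1, Finset.sum_add_distrib, Finset.sum_const, Finset.card_univ, Fintype.card_fin,
        smul_eq_mul, mul_one] at hsize
      omega
    calc S.card = ∑ _i ∈ S, 1 := by simp
      _ ≤ ∑ i ∈ S, ((T i).card - 1) := by
          apply Finset.sum_le_sum
          intro i hi
          have := (Finset.mem_filter.mp hi).2
          omega
      _ ≤ ∑ i, ((T i).card - 1) :=
          Finset.sum_le_sum_of_subset (Finset.filter_subset _ _)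
      _ ≤ d := key
  refine ⟨S, hSd, fun i => ∑ v ∈ T i, c i v • v, ?_, ?_, hsum.symm⟩
  · intro i hiS
    have hcard : (T i).card = 1 := by
      have : ¬ 2 ≤ (T i).card := by
        intro h2
        exact hiS (Finset.mem_filter.mpr ⟨mem_univ i, h2⟩)
      have := hcard1 i
      omega
    obtain ⟨v, hv⟩ := Finset.card_eq_one.mp hcard
    have hc1 : c i v = 1 := by
      have := hone i
      rwa [hv, Finset.sum_singleton] at this
    show ∑ u ∈ T i, c i u • u ∈ V i
    rw [hv, Finset.sum_singleton, hc1, one_smul]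
    exact hV i (by rw [hv]; simp)
  · intro i _
    show ∑ u ∈ T i, c i u • u ∈ convexHull ℝ (V i)
    have := Finset.centerMass_mem_convexHull (T i)
      (fun v hv => (hpos i v hv).le) (by rw [hone i]; norm_num)
      (fun v hv => hV i hv)
    rwa [Finset.centerMass_eq_of_sum_1 _ _ (hone i)] at this
end

section
/- Let x be in the convex hull of sum_{i=1}^n Co(V_i) for subsets V_i of R^d, written as x = sum_{i=1}^n sum_{j=1}^{d+1} lambda_{ij} v_{ij} with v_{ij} in V_i, lambda_{ij} >= 0 and sum_j lambda_{ij} = 1 for each i. Then there exist nonnegative coefficients mu_{ij}, with at most d+n of them nonzero, such that x = sum_{i,j} mu_{ij} v_{ij} and sum_j mu_{ij} = 1 for each i. -/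
open Finset in
private lemma conic_aux (d n : ℕ) (v : Fin n → Fin (d + 1) → (Fin d → ℝ)) :
    ∀ N (mu : Fin n × Fin (d + 1) → ℝ),
      (univ.filter fun p => mu p ≠ 0).card ≤ N →
      (∀ p, 0 ≤ mu p) → (∀ i, ∑ j, mu (i, j) = 1) →
      ∃ nu : Fin n × Fin (d + 1) → ℝ,
        (∀ p, 0 ≤ nu p) ∧
        (univ.filter fun p => nu p ≠ 0).card ≤ d + n ∧
        (∀ i, ∑ j, nu (i, j) = 1) ∧
        ∑ p, nu p • v p.1 p.2 = ∑ p, mu p • v p.1 p.2 := by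
  intro N
  induction N with
  | zero =>
    intro mu hcard hpos hsum
    exact ⟨mu, hpos, le_trans hcard (Nat.zero_le _), hsum, rfl⟩
  | succ N ih =>
    intro mu hcard hpos hsum
    by_cases hle : (univ.filter fun p => mu p ≠ 0).card ≤ d + n
    · exact ⟨mu, hpos, hle, hsum, rfl⟩
    classical
    set s : Finset (Fin n × Fin (d + 1)) := univ.filter fun p => mu p ≠ 0 with hs
    have hsc : d + n < s.card := not_le.mp hle
    set z : Fin n × Fin (d + 1) → (Fin d → ℝ) × (Fin n → ℝ) :=
      fun p => (v p.1 p.2, Pi.single p.1 1) with hz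
    have hrank : Module.finrank ℝ ((Fin d → ℝ) × (Fin n → ℝ)) = d + n := by
      simp [Module.finrank_prod, Module.finrank_fin_fun]
    have hdep : ¬ LinearIndependent ℝ (fun p : s => z p) := by
      intro hli
      have := hli.fintype_card_le_finrank
      rw [hrank, Fintype.card_coe] at this
      omega
    rw [Fintype.not_linearIndependent_iff] at hdep
    obtain ⟨g, hg0, p0, hp0⟩ := hdep
    obtain ⟨c, hc0, q1, hq1⟩ :
        ∃ c : s → ℝ, (∑ p, c p • z p = 0) ∧ ∃ q : s, 0 < c q := by
      by_cases hp : ∃ q : s, 0 < g q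
      · exact ⟨g, hg0, hp⟩
      · push_neg at hp
        refine ⟨-g, by simp [hg0, ← Finset.sum_neg_distrib]; simpa using hg0, p0, ?_⟩
        simp only [Pi.neg_apply, neg_pos]
        exact lt_of_le_of_ne (hp p0) hp0
    -- extend c to all indices
    set C : Fin n × Fin (d + 1) → ℝ := fun p => if h : p ∈ s then c ⟨p, h⟩ else 0 with hC
    have hCzero : ∀ p ∉ s, C p = 0 := fun p hp => dif_neg hp
    have hCsum : ∑ p ∈ s, C p • z p = 0 := by
      rw [← Finset.sum_attach s (fun p => C p • z p), ← hc0]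
      exact Finset.sum_congr rfl fun p _ => by simp [hC]
    have hCsum' : ∑ p, C p • z p = 0 := by
      rw [← hCsum]
      exact (Finset.sum_subset (Finset.subset_univ s)
        (fun p _ hp => by rw [hCzero p hp, zero_smul])).symm
    have hCv : ∑ p, C p • v p.1 p.2 = 0 := by
      have := congrArg Prod.fst hCsum'
      simpa [hz, Prod.fst_sum] using this
    have hCblock : ∀ i, ∑ j, C (i, j) = 0 := by
      intro i
      have h2 := congrArg Prod.snd hCsum'
      rw [Prod.snd_sum] at h2
      have hthis := congrFun h2 i
      simp only [hz, Prod.smul_mk, Pi.smul_apply, Finset.sum_apply, Pi.zero_apply,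
        Pi.single_apply, smul_eq_mul, mul_ite, mul_one, mul_zero] at hthis
      rw [Fintype.sum_prod_type] at hthis
      have h3 : ∀ x : Fin n, (∑ x1 : Fin (d+1), if i = x then C (x, x1) else 0)
          = if i = x then ∑ x1 : Fin (d+1), C (x, x1) else 0 := by
        intro x; split <;> simp
      rw [Finset.sum_congr rfl (fun x _ => h3 x), Finset.sum_ite_eq] at hthis
      simpa using hthis
    -- the positive coefficient
    have hq0s : (q1 : Fin n × Fin (d+1)) ∈ s := q1.2
    have hq0 : 0 < C (q1 : Fin n × Fin (d+1)) := by
      rw [hC]; simpa [dif_pos q1.2] using hq1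
    -- perturb
    have hPne : (s.filter fun p => 0 < C p).Nonempty :=
      ⟨q1, mem_filter.mpr ⟨hq0s, hq0⟩⟩
    obtain ⟨q, hqmem, hqmin⟩ := (s.filter fun p => 0 < C p).exists_min_image
      (fun p => mu p / C p) hPne
    obtain ⟨hqs, hqC⟩ := mem_filter.mp hqmem
    set t : ℝ := mu q / C q with ht
    have ht0 : 0 ≤ t := div_nonneg (hpos q) hqC.le
    set nu : Fin n × Fin (d + 1) → ℝ := fun p => mu p - t * C p with hnu
    have hnupos : ∀ p, 0 ≤ nu p := by
      intro p
      by_cases hc : 0 < C p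
      · have hps : p ∈ s := by
          by_contra h; rw [hCzero p h] at hc; exact lt_irrefl 0 hc
        have hmin := hqmin p (mem_filter.mpr ⟨hps, hc⟩)
        rw [le_div_iff₀ hc] at hmin
        simp only [hnu]; linarith
      · push_neg at hc
        have h1 : t * C p ≤ 0 := mul_nonpos_of_nonneg_of_nonpos ht0 hc
        have h2 := hpos p
        simp only [hnu]; linarith
    have hnuq : nu q = 0 := by
      simp [hnu, ht, div_mul_cancel₀ _ (ne_of_gt hqC)]
    have hsub : (univ.filter fun p => nu p ≠ 0) ⊆ s.erase q := by
      intro p hp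
      rw [mem_filter] at hp
      refine mem_erase.mpr ⟨fun h => hp.2 (h ▸ hnuq), ?_⟩
      by_contra h
      have hmu0 : mu p = 0 := by
        have := hs ▸ h; simp [mem_filter] at this; exact this
      exact hp.2 (by simp [hnu, hCzero p h, hmu0])
    have hcard' : (univ.filter fun p => nu p ≠ 0).card ≤ N := by
      have h1 : (univ.filter fun p => nu p ≠ 0).card ≤ (s.erase q).card :=
        card_le_card hsub
      have h2 : (s.erase q).card < s.card := card_erase_lt_of_mem hqs
      omega
    have hnusum : ∀ i, ∑ j, nu (i, j) = 1 := by
      intro i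
      have heq : ∑ j, nu (i, j) = (∑ j, mu (i, j)) - t * ∑ j, C (i, j) := by
        simp [hnu, Finset.sum_sub_distrib, Finset.mul_sum]
      rw [heq, hsum i, hCblock i]; ring
    have hnux : ∑ p, nu p • v p.1 p.2 = ∑ p, mu p • v p.1 p.2 := by
      have heq : ∑ p, nu p • v p.1 p.2
          = (∑ p, mu p • v p.1 p.2) - t • ∑ p, C p • v p.1 p.2 := by
        rw [Finset.smul_sum, ← Finset.sum_sub_distrib]
        refine Finset.sum_congr rfl fun p _ => ?_
        simp [hnu, sub_smul, smul_smul]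
      rw [heq, hCv, smul_zero, sub_zero]
    obtain ⟨nu', h1, h2, h3, h4⟩ := ih nu hcard' hnupos hnusum
    exact ⟨nu', h1, h2, h3, h4.trans hnux⟩

/-- Conic-Carathéodory step of the Shapley–Folkman proof: given a representation
`x = ∑ᵢ ∑ⱼ λᵢⱼ vᵢⱼ` with convex weights in each block `i`, there exist nonnegative
coefficients `μᵢⱼ`, at most `d + n` of which are nonzero, with `x = ∑ᵢⱼ μᵢⱼ vᵢⱼ`
and `∑ⱼ μᵢⱼ = 1` for each `i`. -/
theorem conic_caratheodory_step (d n : ℕ)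
    (V : Fin n → Set (Fin d → ℝ)) (x : Fin d → ℝ)
    (v : Fin n → Fin (d + 1) → (Fin d → ℝ)) (lam : Fin n → Fin (d + 1) → ℝ)
    (hv : ∀ i j, v i j ∈ V i)
    (hlam : ∀ i j, 0 ≤ lam i j) (hsum : ∀ i, ∑ j, lam i j = 1)
    (hx : x = ∑ i, ∑ j, lam i j • v i j) :
    ∃ mu : Fin n → Fin (d + 1) → ℝ,
      (∀ i j, 0 ≤ mu i j) ∧
      ((Finset.univ.filter (fun p : Fin n × Fin (d + 1) => mu p.1 p.2 ≠ 0)).card ≤ d + n) ∧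
      (∀ i, ∑ j, mu i j = 1) ∧
      x = ∑ i, ∑ j, mu i j • v i j := by
  obtain ⟨nu, h1, h2, h3, h4⟩ := conic_aux d n v (n * (d + 1))
    (fun p => lam p.1 p.2)
    (by
      calc (Finset.univ.filter fun p : Fin n × Fin (d+1) => lam p.1 p.2 ≠ 0).card
          ≤ (Finset.univ : Finset (Fin n × Fin (d+1))).card := Finset.card_filter_le _ _
        _ = n * (d + 1) := by simp)
    (fun p => hlam p.1 p.2) hsum
  refine ⟨fun i j => nu (i, j), fun i j => h1 (i, j), ?_, h3, ?_⟩
  · exact h2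
  · simp only [Fintype.sum_prod_type] at h4
    rw [hx]; exact h4.symm
end

section
/- (Hoeffding-Serfling, union bound form) Let v_1,...,v_N be real numbers with |v_j| <= R for all j, with mean mu = (1/N) sum_j v_j. Let J be a uniformly random subset of {1,...,N} of size m and set S_m = sum_{j in J} v_j. Then for all eps > 0, P( |(N/m) S_m - N mu| >= eps ) <= 2 exp( - alpha_m eps^2 / (2 N (1 - alpha_m) R^2) ), where alpha_m = (m-1)/N. -/
/-!
Serfling's argument. For a `k`-subset `J` put `Z J = (∑_{j ∈ J} v j - k μ) / (N - k)`. Adding to `J`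
a uniformly chosen new element changes `Z` by an increment of mean zero with values in an interval
of length `2R / (N - k - 1)`, so Hoeffding's lemma at each step, averaged over all `k`-subsets,
bounds the moment generating function of `Z` on `m`-subsets by that of a centred Gaussian of
variance `R² ∑_{i=1}^m (N - i)⁻²`. The Chernoff bound for `Z`, the estimate
`∑_{i=1}^m (N - i)⁻² ≤ m / ((N - m - 1/2) (N - 1/2))` and the identity
`(N/m) S_m - N μ = N (N - m) / m · Z` give the claim.
-/

open Real Finset MeasureTheory ProbabilityTheory

section UniformOnFinset

variable {α : Type*} [MeasurableSpace α] [MeasurableSingletonClass α]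

lemma integrableOn_count_finset (s : Finset α) (f : α → ℝ) : IntegrableOn f s .count := by
  rw [← (s : Set α).biUnion_of_singleton]
  simp [integrableOn_finset_iUnion]

lemma integral_uniformOn_finset (s : Finset α) (f : α → ℝ) :
    ∫ x, f x ∂uniformOn (s : Set α) = (∑ x ∈ s, f x) / #s := by
  rw [uniformOn, ProbabilityTheory.cond, integral_smul_measure,
    setIntegral_finset _ (integrableOn_count_finset s f)]
  simp [div_eq_inv_mul, Finset.mul_sum]

lemma integrable_uniformOn_finset (s : Finset α) (f : α → ℝ) :
    Integrable f (uniformOn (s : Set α)) := by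
  rcases s.eq_empty_or_nonempty with rfl | hs
  · simp
  · exact (integrableOn_count_finset s f).smul_measure (by simpa using hs.ne_empty)

lemma measureReal_uniformOn_finset (s : Finset α) (p : α → Prop) [DecidablePred p] :
    (uniformOn (s : Set α)).real {x | p x} = #{x ∈ s | p x} / #s := by
  have : (s : Set α) ∩ {x | p x} = ↑(s.filter p) := by ext; simp
  rw [measureReal_def, uniformOn, cond_apply s.measurableSet, this, Measure.count_apply_finset,
    Measure.count_apply_finset]
  simp [div_eq_inv_mul]

end UniformOnFinset

lemma sum_exp_mul_le_of_mem_Icc {α : Type*} {s : Finset α} (hs : s.Nonempty) {f : α → ℝ}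
    {a b : ℝ} (hf : ∀ x ∈ s, f x ∈ Set.Icc a b) (t : ℝ) :
    ∑ x ∈ s, exp (t * f x) ≤
      #s * exp (t * ((∑ x ∈ s, f x) / #s) + ((b - a) / 2) ^ 2 * t ^ 2 / 2) := by
  let : MeasurableSpace α := ⊤
  have := isProbabilityMeasure_uniformOn s.finite_toSet (coe_nonempty.2 hs)
  have hmem : ∀ᵐ x ∂uniformOn (s : Set α), f x ∈ Set.Icc a b := by
    filter_upwards [ae_cond_mem s.measurableSet] with x hx using hf x hx
  have hmgf := (hasSubgaussianMGF_of_mem_Icc measurable_from_top.aemeasurable hmem).mgf_le t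
  have hs' : (0 : ℝ) < #s := by exact_mod_cast hs.card_pos
  rw [mgf, integral_uniformOn_finset, integral_uniformOn_finset, div_le_iff₀ hs'] at hmgf
  have hc : ((‖b - a‖₊ / 2) ^ 2 : NNReal) = ((b - a) / 2 : ℝ) ^ 2 := by
    simp [div_pow, sq_abs]
  rw [hc] at hmgf
  calc ∑ x ∈ s, exp (t * f x)
      = exp (t * ((∑ x ∈ s, f x) / #s)) * ∑ x ∈ s, exp (t * (f x - (∑ x ∈ s, f x) / #s)) := by
        rw [Finset.mul_sum]
        congr! 1 with x
        rw [← exp_add]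
        ring_nf
    _ ≤ exp (t * ((∑ x ∈ s, f x) / #s)) * (exp (((b - a) / 2) ^ 2 * t ^ 2 / 2) * #s) := by
        gcongr
    _ = _ := by rw [exp_add]; ring

lemma card_filter_le_abs_div_card_le {α : Type*} {s : Finset α} {Z : α → ℝ} {c : ℝ} (hc : 0 ≤ c)
    (hZ : ∀ t, ∑ x ∈ s, exp (t * Z x) ≤ #s * exp (c * t ^ 2 / 2)) {ε : ℝ} (hε : 0 ≤ ε) :
    (#{x ∈ s | ε ≤ |Z x|} : ℝ) / #s ≤ 2 * exp (-ε ^ 2 / (2 * c)) := by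
  let : MeasurableSpace α := ⊤
  have hsub : HasSubgaussianMGF Z c.toNNReal (uniformOn (s : Set α)) :=
    { integrable_exp_mul := fun t => integrable_uniformOn_finset s _
      mgf_le := fun t => by
        rw [mgf, integral_uniformOn_finset, Real.coe_toNNReal c hc]
        rcases s.eq_empty_or_nonempty with rfl | hs
        · simp [exp_nonneg]
        · exact div_le_of_le_mul₀ (by positivity) (by positivity) (by linarith [hZ t]) }
  have hunion : {x | ε ≤ |Z x|} = {x | ε ≤ Z x} ∪ {x | ε ≤ (-Z) x} := by
    ext x; simp [le_abs', le_neg, or_comm]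
  rw [← measureReal_uniformOn_finset, hunion, two_mul]
  refine (measureReal_union_le _ _).trans (add_le_add ?_ ?_)
  · simpa [Real.coe_toNNReal c hc] using hsub.measure_ge_le hε
  · simpa [Real.coe_toNNReal c hc] using hsub.neg.measure_ge_le hε

section Sampling

variable {ι : Type*} [Fintype ι]

/-- Along a uniformly random increasing chain of subsets `J₀ ⊂ J₁ ⊂ ⋯`, the values
`serflingMartingale v μ Jₖ` form a martingale when `μ` is the mean of `v`. -/
noncomputable def serflingMartingale (v : ι → ℝ) (μ : ℝ) (J : Finset ι) : ℝ :=
  (∑ j ∈ J, v j - #J * μ) / (Fintype.card ι - #J)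

variable {v : ι → ℝ} {μ : ℝ}

lemma serflingMartingale_empty : serflingMartingale v μ ∅ = 0 := by
  simp [serflingMartingale]

lemma div_card_mul_sum_sub_eq_mul_serflingMartingale {J : Finset ι} (hJ₀ : 0 < #J)
    (hJ : #J < Fintype.card ι) :
    (Fintype.card ι / #J : ℝ) * ∑ j ∈ J, v j - Fintype.card ι * μ =
      Fintype.card ι * (Fintype.card ι - #J) / #J * serflingMartingale v μ J := by
  have h₀ : (#J : ℝ) ≠ 0 := by positivity
  have h : (Fintype.card ι : ℝ) - #J ≠ 0 := sub_ne_zero.2 (by exact_mod_cast hJ.ne')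
  rw [serflingMartingale]
  field_simp

variable [DecidableEq ι]

lemma sum_powersetCard_sum_compl_insert {M : Type*} [AddCommMonoid M] (k : ℕ)
    (g : Finset ι → M) :
    ∑ K ∈ powersetCard k univ, ∑ x ∈ Kᶜ, g (insert x K) =
      (k + 1) • ∑ J ∈ powersetCard (k + 1) univ, g J := by
  have hcard : ∀ J ∈ powersetCard (k + 1) (univ : Finset ι), (k + 1) • g J = ∑ _x ∈ J, g J := by
    intro J hJ
    rw [sum_const, (mem_powersetCard.1 hJ).2]
  rw [smul_sum, sum_congr rfl hcard, sum_sigma', sum_sigma']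
  refine sum_nbij' (fun p => ⟨insert p.2 p.1, p.2⟩) (fun q => ⟨q.1.erase q.2, q.2⟩)
    ?_ ?_ ?_ ?_ (fun _ _ => rfl)
  · rintro ⟨K, x⟩ hp
    simp only [mem_sigma, mem_powersetCard, mem_compl] at hp ⊢
    exact ⟨⟨subset_univ _, by rw [card_insert_of_notMem hp.2, hp.1.2]⟩, mem_insert_self _ _⟩
  · rintro ⟨J, x⟩ hq
    simp only [mem_sigma, mem_powersetCard, mem_compl] at hq ⊢
    exact ⟨⟨subset_univ _, by rw [card_erase_of_mem hq.2, hq.1.2, Nat.add_sub_cancel]⟩,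
      notMem_erase _ _⟩
  · rintro ⟨K, x⟩ hp
    simp only [mem_sigma, mem_compl] at hp
    simp [erase_insert hp.2]
  · rintro ⟨J, x⟩ hq
    simp only [mem_sigma] at hq
    simp [insert_erase hq.2]

variable {K : Finset ι}

lemma serflingMartingale_insert {x : ι} (hx : x ∉ K) :
    serflingMartingale v μ (insert x K) =
      (∑ j ∈ K, v j - (#K + 1) * μ + v x) / (Fintype.card ι - #K - 1) := by
  rw [serflingMartingale, sum_insert hx, card_insert_of_notMem hx]
  push_cast
  ring_nf

lemma sum_compl_serflingMartingale_insert (hμ : ∑ j, v j = Fintype.card ι * μ)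
    (hK : #K + 1 < Fintype.card ι) :
    ∑ x ∈ Kᶜ, serflingMartingale v μ (insert x K) = #Kᶜ * serflingMartingale v μ K := by
  have hn : (#K : ℝ) + 1 < Fintype.card ι := by exact_mod_cast hK
  have hcompl : ∑ x ∈ Kᶜ, v x = Fintype.card ι * μ - ∑ j ∈ K, v j := by
    rw [← hμ, ← sum_compl_add_sum K v, add_sub_cancel_right]
  rw [sum_congr rfl fun x hx => serflingMartingale_insert (mem_compl.1 hx), ← sum_div,
    sum_add_distrib, sum_const, nsmul_eq_mul, hcompl, card_compl, Nat.cast_sub (card_le_univ K),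
    serflingMartingale]
  field_simp [(by linarith : (Fintype.card ι : ℝ) - #K - 1 ≠ 0),
    (by linarith : (Fintype.card ι : ℝ) - #K ≠ 0)]
  ring

lemma sum_compl_exp_serflingMartingale_insert_le {a b : ℝ} (hv : ∀ j, v j ∈ Set.Icc a b)
    (hμ : ∑ j, v j = Fintype.card ι * μ) (hK : #K + 1 < Fintype.card ι) (t : ℝ) :
    ∑ x ∈ Kᶜ, exp (t * serflingMartingale v μ (insert x K)) ≤
      #Kᶜ * exp (t * serflingMartingale v μ K +
        ((b - a) / 2 / (Fintype.card ι - #K - 1)) ^ 2 * t ^ 2 / 2) := by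
  have hd : (0 : ℝ) < Fintype.card ι - #K - 1 := by
    have : (#K : ℝ) + 1 < Fintype.card ι := by exact_mod_cast hK
    linarith
  have hne : Kᶜ.Nonempty := by
    rw [← card_pos, card_compl]
    omega
  set c := ∑ j ∈ K, v j - (#K + 1) * μ
  have hrange : ∀ x ∈ Kᶜ, serflingMartingale v μ (insert x K) ∈
      Set.Icc ((c + a) / (Fintype.card ι - #K - 1)) ((c + b) / (Fintype.card ι - #K - 1)) := by
    intro x hx
    rw [serflingMartingale_insert (mem_compl.1 hx)]
    exact ⟨by gcongr; exact (hv x).1, by gcongr; exact (hv x).2⟩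
  have hmean : (∑ x ∈ Kᶜ, serflingMartingale v μ (insert x K)) / #Kᶜ =
      serflingMartingale v μ K := by
    rw [sum_compl_serflingMartingale_insert hμ hK, mul_div_cancel_left₀]
    exact_mod_cast hne.card_pos.ne'
  have hwidth : ((c + b) / (Fintype.card ι - #K - 1) - (c + a) / (Fintype.card ι - #K - 1)) / 2
      = (b - a) / 2 / (Fintype.card ι - #K - 1) := by
    field_simp
    ring
  simpa only [hmean, hwidth] using sum_exp_mul_le_of_mem_Icc hne hrange t

theorem sum_exp_serflingMartingale_le {a b : ℝ} (hv : ∀ j, v j ∈ Set.Icc a b)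
    (hμ : ∑ j, v j = Fintype.card ι * μ) (t : ℝ) {k : ℕ} (hk : k < Fintype.card ι) :
    ∑ J ∈ powersetCard k univ, exp (t * serflingMartingale v μ J) ≤
      (Fintype.card ι).choose k *
        exp (((b - a) / 2) ^ 2 * (∑ i ∈ Icc 1 k, 1 / ((Fintype.card ι : ℝ) - i) ^ 2) *
          t ^ 2 / 2) := by
  induction k with
  | zero => simp [serflingMartingale_empty]
  | succ k ih =>
    set n := Fintype.card ι
    set w := ((b - a) / 2 / (n - k - 1)) ^ 2 * t ^ 2 / 2
    have hchoose : (n.choose k : ℝ) * (n - k) = (k + 1) * n.choose (k + 1) := by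
      have := Nat.choose_succ_right_eq n k
      rw [← Nat.cast_sub (by omega), ← Nat.cast_mul, ← this]
      push_cast
      ring
    have hstep : ∀ K ∈ powersetCard k univ,
        ∑ x ∈ Kᶜ, exp (t * serflingMartingale v μ (insert x K)) ≤
          (n - k) * exp w * exp (t * serflingMartingale v μ K) := by
      intro K hK
      have hKk := (mem_powersetCard.1 hK).2
      have := sum_compl_exp_serflingMartingale_insert_le hv hμ (K := K) (by omega) t
      rw [card_compl, hKk, Nat.cast_sub (by omega : k ≤ n), exp_add] at this
      linarith
    rw [← mul_le_mul_iff_right₀ (by positivity : (0 : ℝ) < k + 1)]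
    calc ((k : ℝ) + 1) * ∑ J ∈ powersetCard (k + 1) univ, exp (t * serflingMartingale v μ J)
        = ∑ K ∈ powersetCard k univ, ∑ x ∈ Kᶜ, exp (t * serflingMartingale v μ (insert x K)) := by
          rw [sum_powersetCard_sum_compl_insert k fun J => exp (t * serflingMartingale v μ J),
            nsmul_eq_mul]
          push_cast
          rfl
      _ ≤ ∑ K ∈ powersetCard k univ, (n - k) * exp w * exp (t * serflingMartingale v μ K) :=
          sum_le_sum hstep
      _ = (n - k) * exp w * ∑ K ∈ powersetCard k univ, exp (t * serflingMartingale v μ K) := by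
          rw [mul_sum]
      _ ≤ (n - k) * exp w * (n.choose k *
            exp (((b - a) / 2) ^ 2 * (∑ i ∈ Icc 1 k, 1 / ((n : ℝ) - i) ^ 2) * t ^ 2 / 2)) := by
          have : (k : ℝ) < n := by exact_mod_cast k.lt_succ_self.trans hk
          exact mul_le_mul_of_nonneg_left (ih (by omega)) (mul_nonneg (by linarith) (exp_pos _).le)
      _ = _ := by
          have hw : ((b - a) / 2) ^ 2 * (∑ i ∈ Icc 1 k, 1 / ((n : ℝ) - i) ^ 2 +
              1 / ((n : ℝ) - (k + 1 : ℕ)) ^ 2) * t ^ 2 / 2 =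
              ((b - a) / 2) ^ 2 * (∑ i ∈ Icc 1 k, 1 / ((n : ℝ) - i) ^ 2) * t ^ 2 / 2 + w := by
            simp only [w, div_pow]
            push_cast
            ring
          rw [sum_Icc_succ_top (by omega), hw, exp_add]
          linear_combination exp w *
            exp (((b - a) / 2) ^ 2 * (∑ i ∈ Icc 1 k, 1 / ((n : ℝ) - i) ^ 2) * t ^ 2 / 2) * hchoose

end Sampling

lemma sum_Icc_one_div_sub_sq_le {n : ℝ} {k : ℕ} (hk : k + 1 ≤ n) :
    ∑ i ∈ Icc 1 k, 1 / (n - i) ^ 2 ≤ 1 / (n - k - 1 / 2) - 1 / (n - 1 / 2) := by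
  induction k with
  | zero => simp
  | succ k ih =>
    push_cast at hk ⊢
    have hstep : 1 / (n - (k + 1)) ^ 2 ≤ 1 / (n - (k + 1) - 1 / 2) - 1 / (n - k - 1 / 2) := by
      rw [div_sub_div _ _ (by linarith) (by linarith),
        div_le_div_iff₀ (by nlinarith) (by nlinarith)]
      nlinarith
    rw [sum_Icc_succ_top (by omega)]
    push_cast
    linarith [ih (by linarith)]

lemma sum_Icc_one_div_sub_sq_pos {n : ℝ} {k : ℕ} (hk : 1 ≤ k) (hkn : k < n) :
    0 < ∑ i ∈ Icc 1 k, 1 / (n - i) ^ 2 := by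
  refine sum_pos (fun i hi => ?_) ⟨1, mem_Icc.2 ⟨le_rfl, hk⟩⟩
  have : (i : ℝ) ≤ k := by exact_mod_cast (mem_Icc.1 hi).2
  have : 0 < n - i := by linarith
  positivity

lemma serfling_exponent_le {n m σ ε R : ℝ} (hm : 1 ≤ m) (hmn : m + 1 ≤ n) (hσ : 0 < σ)
    (hσle : σ ≤ 1 / (n - m - 1 / 2) - 1 / (n - 1 / 2)) (hR : 0 < R) :
    -(m * ε / (n * (n - m))) ^ 2 / (2 * (R ^ 2 * σ)) ≤
      -((m - 1) / n) * ε ^ 2 / (2 * n * (1 - (m - 1) / n) * R ^ 2) := by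
  have hn : 0 < n := by linarith
  have hσm : σ * ((n - m - 1 / 2) * (n - 1 / 2)) ≤ m := by
    rw [div_sub_div _ _ (by linarith) (by linarith), le_div_iff₀ (by nlinarith)] at hσle
    linarith
  have hcore : (m - 1) * n * (n - m) ^ 2 ≤ m * ((n - m + 1) * ((n - m - 1 / 2) * (n - 1 / 2))) := by
    have k1 : (n - m) ^ 2 ≤ (n - m + 1) * (n - m - 1 / 2) := by nlinarith
    have k2 : (m - 1) * n ≤ m * (n - 1 / 2) := by linarith
    nlinarith [mul_le_mul k2 k1 (sq_nonneg (n - m)) (by nlinarith : (0 : ℝ) ≤ m * (n - 1 / 2))]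
  have hlhs : -((m - 1) / n) * ε ^ 2 / (2 * n * (1 - (m - 1) / n) * R ^ 2) =
      -((m - 1) * ε ^ 2 / (2 * n * (n - m + 1) * R ^ 2)) := by
    field_simp
    ring
  have hd : 0 < 2 * n * (n - m + 1) * R ^ 2 :=
    mul_pos (mul_pos (by positivity) (by linarith)) (by positivity)
  rw [hlhs, neg_div, neg_le_neg_iff, div_le_div_iff₀ hd (by positivity)]
  have hP : 0 < (n - m - 1 / 2) * (n - 1 / 2) := mul_pos (by linarith) (by linarith)
  have hkey : (m - 1) * σ * n * (n - m) ^ 2 ≤ m ^ 2 * (n - m + 1) := by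
    refine le_of_mul_le_mul_right ?_ hP
    have h0 : 0 ≤ (m - 1) * n * (n - m) ^ 2 := by
      have := sub_nonneg.2 hm
      positivity
    calc (m - 1) * σ * n * (n - m) ^ 2 * ((n - m - 1 / 2) * (n - 1 / 2))
        = (m - 1) * n * (n - m) ^ 2 * (σ * ((n - m - 1 / 2) * (n - 1 / 2))) := by ring
      _ ≤ (m - 1) * n * (n - m) ^ 2 * m := mul_le_mul_of_nonneg_left hσm h0
      _ ≤ m * ((n - m + 1) * ((n - m - 1 / 2) * (n - 1 / 2))) * m := by gcongr
      _ = m ^ 2 * (n - m + 1) * ((n - m - 1 / 2) * (n - 1 / 2)) := by ring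
  rw [div_pow, div_mul_eq_mul_div, le_div_iff₀ (by nlinarith)]
  nlinarith [mul_le_mul_of_nonneg_left hkey (by positivity : 0 ≤ 2 * R ^ 2 * ε ^ 2 * n)]

/-- Hoeffding–Serfling inequality (union-bound form): sampling `m` of the reals
`v₁,…,v_N` uniformly without replacement (i.e. a uniform subset `J` of size `m`),
the rescaled sample sum `(N/m) ∑_{j ∈ J} vⱼ` concentrates around `N μ`:
`P(|(N/m) S_m - N μ| ≥ ε) ≤ 2 exp(-α_m ε² / (2 N (1-α_m) R²))` with `α_m = (m-1)/N`. -/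
theorem hoeffding_serfling (N m : ℕ) (hm : 1 ≤ m) (hmN : m ≤ N)
    (v : Fin N → ℝ) (R : ℝ) (hR : 0 < R) (hv : ∀ j, |v j| ≤ R)
    (μ : ℝ) (hμ : μ = (1 / (N : ℝ)) * ∑ j, v j)
    (ε : ℝ) (hε : 0 < ε) :
    (((Finset.univ.powersetCard m : Finset (Finset (Fin N))).filter
        (fun J => ε ≤ |((N : ℝ) / m) * (∑ j ∈ J, v j) - N * μ|)).card : ℝ) /
      ((Finset.univ.powersetCard m : Finset (Finset (Fin N))).card : ℝ) ≤
    2 * exp (-(((m : ℝ) - 1) / N) * ε ^ 2 /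
        (2 * N * (1 - ((m : ℝ) - 1) / N) * R ^ 2)) := by
  have hm0 : (0 : ℝ) < m := by exact_mod_cast hm
  have hN0 : (N : ℝ) ≠ 0 := Nat.cast_ne_zero.2 (by omega)
  have hμ' : ∑ j, v j = N * μ := by
    rw [hμ]
    field_simp
  obtain hlt | rfl := hmN.lt_or_eq
  · have hNm : (0 : ℝ) < N - m := sub_pos.2 (by exact_mod_cast hlt)
    have hevent : ∀ J ∈ (univ.powersetCard m : Finset (Finset (Fin N))),
        ε ≤ |((N : ℝ) / m) * (∑ j ∈ J, v j) - N * μ| ↔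
          m * ε / (N * (N - m)) ≤ |serflingMartingale v μ J| := by
      intro J hJ
      have hJ : #J = m := (mem_powersetCard.1 hJ).2
      have hdev := div_card_mul_sum_sub_eq_mul_serflingMartingale (v := v) (μ := μ)
        (J := J) (by omega) (by simpa [hJ] using hlt)
      rw [Fintype.card_fin, hJ] at hdev
      rw [hdev, abs_mul, abs_of_pos (by positivity), ← div_le_iff₀' (by positivity)]
      field_simp
    have hmgf : ∀ t, ∑ J ∈ (univ.powersetCard m : Finset (Finset (Fin N))),
        exp (t * serflingMartingale v μ J) ≤ #(univ.powersetCard m : Finset (Finset (Fin N))) *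
          exp (R ^ 2 * (∑ i ∈ Icc 1 m, 1 / ((N : ℝ) - i) ^ 2) * t ^ 2 / 2) := by
      intro t
      have := sum_exp_serflingMartingale_le (fun j => abs_le.1 (hv j)) (by simpa using hμ') t
        (by simpa using hlt)
      rw [show (R - -R) / 2 = R by ring, Fintype.card_fin] at this
      rwa [card_powersetCard, card_univ, Fintype.card_fin]
    rw [filter_congr hevent]
    refine (card_filter_le_abs_div_card_le (by positivity) hmgf (by positivity)).trans ?_
    gcongr 2 * exp ?_
    exact serfling_exponent_le (by exact_mod_cast hm) (by exact_mod_cast hlt)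
      (sum_Icc_one_div_sub_sq_pos hm (by exact_mod_cast hlt))
      (sum_Icc_one_div_sub_sq_le (by exact_mod_cast hlt)) hR
  · have hall : (univ.powersetCard m : Finset (Finset (Fin m))) = {univ} := by
      simpa using powersetCard_self (univ : Finset (Fin m))
    rw [hall, filter_singleton, if_neg (by simpa [div_self hm0.ne', hμ'] using hε.not_ge)]
    simp [exp_nonneg]
end

section
/- (Approximate Caratheodory with high sampling ratio, l_infinity) Let x = sum_{j=1}^N lambda_j V_j in R^d with lambda >= 0, sum lambda_j = 1, and let eps > 0. Set R = max( max_j ||lambda_j V_j||_infty, max_j |lambda_j| ). Then there exists a subset J of {1,...,N} of size |J| = 1 + N * (2 log(4d) (sqrt(N) R / eps)^2) / (1 + 2 log(4d) (sqrt(N) R / eps)^2) and nonnegative coefficients mu_j for j in J such that || x - sum_{j in J} mu_j V_j ||_infty <= eps and | sum_{j in J} mu_j - 1 | <= eps. -/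
/-!
Draw `m` of the `N` indices uniformly without replacement and rescale the retained weights by
`N / m`. Each coordinate of `∑_J (N/m) λⱼ Vⱼ`, and the weight sum `∑_J (N/m) λⱼ`, is a rescaled
sample sum of terms of size at most `R`, so by the Hoeffding–Serfling inequality it misses its
mean (`xᵢ`, resp. `1`) by `ε` or more for at most a fraction `2 exp (-E)` (resp. `2 exp (-4E)`,
the weights lying in `[0, R]` rather than `[-R, R]`) of the samples, where `E` carries the
finite-population factor `∑_{j<m} (N-1-j)⁻²`. Taking `m` as large as the bound allows gives
`E > log (4d) - 5/16`, and the union bound over these `2d + 2` events leaves a good sample.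
The slack `5/16` between `∑_{j<m} (N-1-j)⁻²` and `m / ((N - m) N)` is affordable only when
`(N - m) m > 2 log (4d) N`; otherwise the choice of `m` already gives `(N - m) R ≤ ε`, and
dropping any `N - m` summands suffices.
-/

open Real Finset

open MeasureTheory ProbabilityTheory in
theorem Finset.sum_exp_mul_sub_mean_le {ι : Type*} {s : Finset ι} {c : ι → ℝ} {a b : ℝ}
    (hc : ∀ u ∈ s, c u ∈ Set.Icc a b) (t : ℝ) :
    ∑ u ∈ s, exp (t * (c u - (∑ j ∈ s, c j) / #s)) ≤ #s * exp (t ^ 2 * (b - a) ^ 2 / 8) := by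
  rcases s.eq_empty_or_nonempty with rfl | hs
  · simp
  have : Nonempty s := hs.to_subtype
  let _ : MeasurableSpace s := ⊤
  let μ : Measure s := (PMF.uniformOfFintype s).toMeasure
  have hint (f : ι → ℝ) : ∫ u : s, f u ∂μ = (#s : ℝ)⁻¹ * ∑ u ∈ s, f u := by
    rw [PMF.integral_eq_sum, mul_sum, ← sum_coe_sort s]
    simp [PMF.uniformOfFintype_apply]
  have hmean : ∫ u : s, c u ∂μ = (∑ j ∈ s, c j) / #s := by rw [hint, div_eq_inv_mul]
  have hmgf := (hasSubgaussianMGF_of_mem_Icc (X := fun u : s => c u) (μ := μ)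
    measurable_from_top.aemeasurable (ae_of_all _ fun u => hc u u.2)).mgf_le t
  rw [mgf, hmean, hint fun u => exp (t * (c u - (∑ j ∈ s, c j) / #s)),
    ← le_div_iff₀' (inv_pos.2 (by exact_mod_cast hs.card_pos)), div_inv_eq_mul, mul_comm] at hmgf
  refine hmgf.trans_eq (congrArg (fun z => (#s : ℝ) * exp z) ?_)
  simp only [NNReal.coe_pow, NNReal.coe_div, NNReal.coe_ofNat, coe_nnnorm, Real.norm_eq_abs,
    div_pow, sq_abs]
  ring

theorem Finset.succ_mul_sum_powersetCard_succ {ι M : Type*} [DecidableEq ι] [NonAssocSemiring M]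
    (s : Finset ι) (k : ℕ) (F : Finset ι → M) :
    (k + 1 : M) * ∑ T ∈ s.powersetCard (k + 1), F T
      = ∑ u ∈ s, ∑ T ∈ (s.erase u).powersetCard k, F (insert u T) :=
  calc (k + 1 : M) * ∑ T ∈ s.powersetCard (k + 1), F T
      = ∑ T ∈ s.powersetCard (k + 1), ∑ _u ∈ T, F T := by
        rw [mul_sum]
        refine sum_congr rfl fun T hT => ?_
        rw [sum_const, (mem_powersetCard.1 hT).2, nsmul_eq_mul]
        push_cast
        rfl
    _ = ∑ u ∈ s, ∑ T ∈ s.powersetCard (k + 1) with u ∈ T, F T := sum_comm' (by grind)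
    _ = _ := sum_congr rfl fun u hu =>
        sum_nbij' (erase · u) (insert u) (by grind) (by grind) (by grind) (by grind)
          (by grind [insert_erase])

/-- The variance factor of `k` draws without replacement from `n` items: the `j`-th draw moves
the mean of the items not yet drawn by a `(n - 1 - j)⁻¹` fraction of its deviation. -/
noncomputable def serflingSum (n k : ℕ) : ℝ := ∑ j ∈ range k, ((n : ℝ) - 1 - j)⁻¹ ^ 2

theorem serflingSum_succ {n : ℕ} (hn : 1 ≤ n) (k : ℕ) :
    serflingSum n (k + 1) = ((n : ℝ) - 1)⁻¹ ^ 2 + serflingSum (n - 1) k := by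
  simp only [serflingSum, sum_range_succ', Nat.cast_sub hn]
  push_cast
  ring_nf

theorem serflingSum_nonneg (n k : ℕ) : 0 ≤ serflingSum n k :=
  sum_nonneg fun _ _ => sq_nonneg _

theorem serflingSum_pos {N m : ℕ} (hm0 : 0 < m) (hm : m < N) : 0 < serflingSum N m := by
  refine sum_pos (fun j hj => pow_pos (inv_pos.2 ?_) 2) (nonempty_range_iff.2 hm0.ne')
  have : (j : ℝ) + 1 < N := by exact_mod_cast (Nat.succ_le_of_lt (mem_range.1 hj)).trans_lt hm
  linarith

theorem serflingSum_le {N m : ℕ} (hm : m < N) :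
    serflingSum N m ≤ m / ((N - m - 1 / 2) * (N - 1 / 2)) := by
  have hN : (m : ℝ) + 1 ≤ N := by exact_mod_cast hm
  calc serflingSum N m
      ≤ ∑ j ∈ range m, (1 / ((N : ℝ) - (j + 1 : ℕ) - 1 / 2) - 1 / ((N : ℝ) - j - 1 / 2)) := by
        refine sum_le_sum fun j hj => ?_
        have hj : (j : ℝ) + 1 ≤ m := by exact_mod_cast mem_range.1 hj
        have hx : (1 : ℝ) ≤ N - 1 - j := by linarith
        rw [div_sub_div _ _ (by push_cast; linarith) (by linarith), inv_pow, ← one_div]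
        push_cast
        rw [div_le_div_iff₀ (by positivity) (by nlinarith)]
        nlinarith
    _ = m / ((N - m - 1 / 2) * (N - 1 / 2)) := by
        rw [sum_range_sub (fun j => 1 / ((N : ℝ) - j - 1 / 2)),
          div_sub_div _ _ (by linarith) (by linarith)]
        push_cast
        ring

section Sampling

variable {ι : Type*}

noncomputable def sampleDeviation (s : Finset ι) (c : ι → ℝ) (k : ℕ) (T : Finset ι) : ℝ :=
  ∑ j ∈ T, c j - k * ((∑ j ∈ s, c j) / #s)

theorem sampleDeviation_neg (s : Finset ι) (c : ι → ℝ) (k : ℕ) (T : Finset ι) :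
    sampleDeviation s (-c) k T = -sampleDeviation s c k T := by
  simp only [sampleDeviation, Pi.neg_apply, sum_neg_distrib]
  ring

theorem sampleDeviation_const_mul (s : Finset ι) (θ : ℝ) (c : ι → ℝ) (k : ℕ) (T : Finset ι) :
    sampleDeviation s (fun j => θ * c j) k T = θ * sampleDeviation s c k T := by
  simp only [sampleDeviation, ← mul_sum]
  ring

variable [DecidableEq ι]

/-- `sampleDeviation s c k T / (#s - k)` is the mean of `s` minus the mean of `s \ T`, so drawing
`u` first moves it by `(c u - mean) / (#s - 1)`, which averages to zero over `u ∈ s`. -/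
theorem sampleDeviation_insert_div {s T : Finset ι} {u : ι} (c : ι → ℝ) (hu : u ∈ s)
    (huT : u ∉ T) {k : ℕ} (hk : k + 1 < #s) :
    sampleDeviation s c (k + 1) (insert u T) / (#s - (k + 1 : ℕ))
      = ((#s : ℝ) - 1)⁻¹ * (c u - (∑ j ∈ s, c j) / #s)
        + sampleDeviation (s.erase u) c k T / (#(s.erase u) - k) := by
  have hk' : (k : ℝ) + 2 ≤ #s := by exact_mod_cast hk
  rw [sampleDeviation, sampleDeviation, sum_insert huT, sum_erase_eq_sub hu, card_erase_of_mem hu,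
    Nat.cast_pred (by omega)]
  generalize ∑ j ∈ s, c j = A
  have : (#s : ℝ) ≠ 0 := by linarith
  have : (#s : ℝ) - 1 ≠ 0 := by linarith
  have : (#s : ℝ) - 1 - k ≠ 0 := by linarith
  have : (#s : ℝ) - (k + 1) ≠ 0 := by linarith
  push_cast
  field_simp
  ring

theorem sum_powersetCard_exp_sampleDeviation_le {c : ι → ℝ} {a b : ℝ} (k : ℕ) (s : Finset ι)
    (hc : ∀ u ∈ s, c u ∈ Set.Icc a b) (hk : k < #s) :
    ∑ T ∈ s.powersetCard k, exp (sampleDeviation s c k T / (#s - k))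
      ≤ (#s).choose k * exp ((b - a) ^ 2 / 8 * serflingSum #s k) := by
  induction k generalizing s with
  | zero => simp [serflingSum, sampleDeviation]
  | succ k ih =>
    set n := #s
    set μ := (∑ j ∈ s, c j) / n
    have hinner : ∀ u ∈ s, ∑ T ∈ (s.erase u).powersetCard k,
          exp (sampleDeviation s c (k + 1) (insert u T) / (n - (k + 1 : ℕ)))
        ≤ exp (((n : ℝ) - 1)⁻¹ * (c u - μ)) *
            ((n - 1).choose k * exp ((b - a) ^ 2 / 8 * serflingSum (n - 1) k)) := by
      intro u hu
      rw [sum_congr rfl fun T hT => by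
          rw [sampleDeviation_insert_div c hu (by grind) hk, exp_add],
        ← mul_sum, ← card_erase_of_mem hu]
      gcongr
      exact ih _ (fun v hv => hc v (mem_of_mem_erase hv)) (by rw [card_erase_of_mem hu]; omega)
    have hchoose : (n : ℝ) * (n - 1).choose k = (k + 1) * n.choose (k + 1) := by
      have h := Nat.add_one_mul_choose_eq (n - 1) k
      rw [Nat.sub_add_cancel (by omega)] at h
      exact_mod_cast h.trans (mul_comm _ _)
    refine le_of_mul_le_mul_left ?_ (by positivity : (0 : ℝ) < k + 1)
    calc (k + 1 : ℝ) * ∑ T ∈ s.powersetCard (k + 1),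
          exp (sampleDeviation s c (k + 1) T / (n - (k + 1 : ℕ)))
        = ∑ u ∈ s, ∑ T ∈ (s.erase u).powersetCard k,
          exp (sampleDeviation s c (k + 1) (insert u T) / (n - (k + 1 : ℕ))) :=
          succ_mul_sum_powersetCard_succ _ _ _
      _ ≤ ∑ u ∈ s, exp (((n : ℝ) - 1)⁻¹ * (c u - μ)) *
            ((n - 1).choose k * exp ((b - a) ^ 2 / 8 * serflingSum (n - 1) k)) :=
          sum_le_sum hinner
      _ ≤ n * exp ((b - a) ^ 2 / 8 * ((n : ℝ) - 1)⁻¹ ^ 2) *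
            ((n - 1).choose k * exp ((b - a) ^ 2 / 8 * serflingSum (n - 1) k)) := by
          rw [← sum_mul]
          gcongr
          exact (sum_exp_mul_sub_mean_le hc _).trans_eq
            (congrArg (fun z => (n : ℝ) * exp z) (by ring))
      _ = (k + 1) * (n.choose (k + 1) * exp ((b - a) ^ 2 / 8 * serflingSum n (k + 1))) := by
          rw [serflingSum_succ (by omega), mul_add, exp_add]
          linear_combination exp ((b - a) ^ 2 / 8 * ((n : ℝ) - 1)⁻¹ ^ 2) *
            exp ((b - a) ^ 2 / 8 * serflingSum (n - 1) k) * hchoose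

theorem card_filter_le_sampleDeviation_le {s : Finset ι} {c : ι → ℝ} {a b : ℝ}
    (hc : ∀ u ∈ s, c u ∈ Set.Icc a b) {m : ℕ} (hm : m < #s) {r : ℝ} (hr : 0 ≤ r) :
    (#{T ∈ s.powersetCard m | r ≤ sampleDeviation s c m T} : ℝ)
      ≤ (#s).choose m * exp (-(2 * r ^ 2 / ((#s - m) ^ 2 * ((b - a) ^ 2 * serflingSum #s m)))) := by
  set q : ℝ := #s - m
  set σ := (b - a) ^ 2 * serflingSum #s m
  have hq : 0 < q := by simp only [q, sub_pos]; exact_mod_cast hm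
  have hσ : 0 ≤ σ := mul_nonneg (sq_nonneg (b - a)) (serflingSum_nonneg #s m)
  rcases hσ.eq_or_lt with hσ | hσ
  · rw [← hσ, mul_zero, div_zero, neg_zero, exp_zero, mul_one, ← card_powersetCard]
    exact_mod_cast card_filter_le _ _
  -- the Chernoff parameter minimising `θ ^ 2 * σ / 8 - θ * r / q`
  set θ := 4 * r / (q * σ)
  have hθ : 0 ≤ θ := by positivity
  have hmgf : ∑ T ∈ s.powersetCard m, exp (θ * sampleDeviation s c m T / q)
      ≤ (#s).choose m * exp (θ ^ 2 * σ / 8) := by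
    convert sum_powersetCard_exp_sampleDeviation_le (c := fun j => θ * c j) (a := θ * a)
      (b := θ * b) m s (fun u hu => ⟨by gcongr; exact (hc u hu).1, by gcongr; exact (hc u hu).2⟩)
      hm using 3
    · rw [sampleDeviation_const_mul]
    · ring
  have hlow : #{T ∈ s.powersetCard m | r ≤ sampleDeviation s c m T} * exp (θ * r / q)
      ≤ ∑ T ∈ s.powersetCard m, exp (θ * sampleDeviation s c m T / q) := by
    rw [← nsmul_eq_mul, ← sum_const]
    refine (sum_le_sum fun T hT => ?_).trans
      (sum_le_sum_of_subset_of_nonneg (filter_subset _ _) fun _ _ _ => (exp_pos _).le)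
    gcongr
    exact (mem_filter.1 hT).2
  calc (#{T ∈ s.powersetCard m | r ≤ sampleDeviation s c m T} : ℝ)
      ≤ (#s).choose m * exp (θ ^ 2 * σ / 8) / exp (θ * r / q) :=
        (le_div_iff₀ (exp_pos _)).2 (hlow.trans hmgf)
    _ = (#s).choose m * exp (-(2 * r ^ 2 / (q ^ 2 * σ))) := by
        rw [mul_div_assoc, ← exp_sub]
        congr 2
        simp only [θ]
        field_simp
        ring

theorem card_filter_le_abs_sampleDeviation_le {s : Finset ι} {c : ι → ℝ} {a b : ℝ}
    (hc : ∀ u ∈ s, c u ∈ Set.Icc a b) {m : ℕ} (hm : m < #s) {r : ℝ} (hr : 0 ≤ r) :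
    (#{T ∈ s.powersetCard m | r ≤ |sampleDeviation s c m T|} : ℝ)
      ≤ 2 * (#s).choose m *
          exp (-(2 * r ^ 2 / ((#s - m) ^ 2 * ((b - a) ^ 2 * serflingSum #s m)))) := by
  have hneg := card_filter_le_sampleDeviation_le (c := -c) (a := -b) (b := -a)
    (fun u hu => ⟨neg_le_neg (hc u hu).2, neg_le_neg (hc u hu).1⟩) hm hr
  simp only [sampleDeviation_neg, show -a - -b = b - a by ring] at hneg
  calc (#{T ∈ s.powersetCard m | r ≤ |sampleDeviation s c m T|} : ℝ)
      ≤ #{T ∈ s.powersetCard m | r ≤ sampleDeviation s c m T}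
        + #{T ∈ s.powersetCard m | r ≤ -sampleDeviation s c m T} := by
        simp only [le_abs, filter_or]
        exact_mod_cast card_union_le _ _
    _ ≤ _ := by linarith [card_filter_le_sampleDeviation_le hc hm hr]

theorem exists_mem_powersetCard_forall_abs_sampleDeviation_lt {κ : Type*} [Fintype κ]
    {s : Finset ι} {c : κ → ι → ℝ} {a b : κ → ℝ} (hc : ∀ i, ∀ u ∈ s, c i u ∈ Set.Icc (a i) (b i))
    {m : ℕ} (hm : m < #s) {r : ℝ} (hr : 0 ≤ r)
    (hsmall : ∑ i, 2 * exp (-(2 * r ^ 2 / ((#s - m) ^ 2 * ((b i - a i) ^ 2 * serflingSum #s m))))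
      < 1) :
    ∃ T ∈ s.powersetCard m, ∀ i, |sampleDeviation s (c i) m T| < r := by
  by_contra! hbad
  have hcover : s.powersetCard m ⊆
      univ.biUnion fun i => {T ∈ s.powersetCard m | r ≤ |sampleDeviation s (c i) m T|} := by
    intro T hT
    obtain ⟨i, hi⟩ := hbad T hT
    exact mem_biUnion.2 ⟨i, mem_univ i, mem_filter.2 ⟨hT, hi⟩⟩
  have hC : (0 : ℝ) < (#s).choose m := by exact_mod_cast Nat.choose_pos hm.le
  have := calc ((#s).choose m : ℝ)
      = #(s.powersetCard m) := by rw [card_powersetCard]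
    _ ≤ ∑ i, (#{T ∈ s.powersetCard m | r ≤ |sampleDeviation s (c i) m T|} : ℝ) := by
        exact_mod_cast (card_le_card hcover).trans card_biUnion_le
    _ ≤ ∑ i, 2 * (#s).choose m *
          exp (-(2 * r ^ 2 / ((#s - m) ^ 2 * ((b i - a i) ^ 2 * serflingSum #s m)))) :=
        sum_le_sum fun i _ => card_filter_le_abs_sampleDeviation_le (hc i) hm hr
    _ < (#s).choose m := by
        simp only [mul_comm (2 : ℝ), mul_assoc, ← mul_sum]
        exact mul_lt_of_lt_one_right hC (by simpa only [mul_comm] using hsmall)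
  exact lt_irrefl _ this

end Sampling

theorem exp_five_div_sixteen_le : exp (5 / 16) ≤ 16 / 11 :=
  calc exp (5 / 16) = (exp (-(5 / 16)))⁻¹ := by rw [exp_neg, inv_inv]
    _ ≤ (11 / 16)⁻¹ := inv_anti₀ (by norm_num) (by linarith [add_one_le_exp (-(5 / 16) : ℝ)])
    _ = 16 / 11 := by norm_num

theorem two_mul_exp_neg_add_two_mul_exp_neg_lt_one {d E : ℝ} (hd : 1 ≤ d)
    (hE : log (4 * d) - 5 / 16 < E) : 2 * d * exp (-E) + 2 * exp (-(4 * E)) < 1 := by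
  set y := 4 * d * exp (-E)
  have hy : y < 16 / 11 :=
    calc y = exp (log (4 * d) - E) := by
          rw [exp_sub, exp_log (by positivity), div_eq_mul_inv, ← exp_neg]
      _ < exp (5 / 16) := exp_lt_exp.2 (by linarith)
      _ ≤ 16 / 11 := exp_five_div_sixteen_le
  have hexp : exp (-E) ≤ y / 4 := by nlinarith [exp_pos (-E)]
  have hexp4 : exp (-(4 * E)) = exp (-E) ^ 4 := by rw [← exp_nat_mul]; ring_nf
  rw [hexp4]
  nlinarith [pow_le_pow_left₀ (exp_pos _).le hexp 4, pow_le_pow_left₀ (by positivity) hy.le 4]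

theorem sub_five_div_sixteen_lt {L q N m R ε S : ℝ} (hL : 0 < L) (hR : 0 < R) (hS : 0 < S)
    (hq : 0 < q) (hm : 0 < m) (hN : N = q + m) (hqm : 2 * L * N < q * m)
    (hS_le : (q - 1 / 2) * (N - 1 / 2) * S ≤ m) (hmε : 2 * L * N * R ^ 2 * q < m * ε ^ 2) :
    L - 5 / 16 < (m * ε / N) ^ 2 / (2 * q ^ 2 * R ^ 2 * S) := by
  have hq2L : 2 * L < q := by nlinarith
  have hN8L : 8 * L < N := by nlinarith [sq_nonneg (q - m)]
  have hNpos : 0 < N := by linarith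
  have hslack : (L - 5 / 16) * (N * q) ≤ L * ((q - 1 / 2) * (N - 1 / 2)) := by nlinarith
  rw [lt_div_iff₀ (by positivity), div_pow, lt_div_iff₀ (by positivity)]
  calc (L - 5 / 16) * (2 * q ^ 2 * R ^ 2 * S) * N ^ 2
      = 2 * q * N * R ^ 2 * S * ((L - 5 / 16) * (N * q)) := by ring
    _ ≤ 2 * q * N * R ^ 2 * S * (L * ((q - 1 / 2) * (N - 1 / 2))) := by gcongr
    _ = 2 * L * N * R ^ 2 * q * ((q - 1 / 2) * (N - 1 / 2) * S) := by ring
    _ ≤ 2 * L * N * R ^ 2 * q * m := by gcongr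
    _ < m * ε ^ 2 * m := by gcongr
    _ = (m * ε) ^ 2 := by ring

theorem norm_sum_sub_sum_le {ι E : Type*} [Fintype ι] [SeminormedAddCommGroup E] {y : ι → E}
    {R : ℝ} (hy : ∀ j, ‖y j‖ ≤ R) (J : Finset ι) :
    ‖∑ j, y j - ∑ j ∈ J, y j‖ ≤ (Fintype.card ι - #J) * R := by
  classical
  rw [← sum_sdiff (subset_univ J), add_sub_cancel_right]
  calc ‖∑ j ∈ univ \ J, y j‖ ≤ ∑ j ∈ univ \ J, ‖y j‖ := norm_sum_le _ _
    _ ≤ #(univ \ J) • R := sum_le_card_nsmul _ _ _ fun j _ => hy j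
    _ = _ := by rw [card_sdiff_of_subset (subset_univ _), card_univ, nsmul_eq_mul,
      Nat.cast_sub (card_le_univ J)]

theorem exists_card_eq_norm_sum_sub_sum_le {ι E : Type*} [Fintype ι] [SeminormedAddCommGroup E]
    {y : ι → E} {lam : ι → ℝ} {R ε : ℝ} (hy : ∀ j, ‖y j‖ ≤ R) (hlam : ∀ j, |lam j| ≤ R) {m : ℕ}
    (hm : m ≤ Fintype.card ι) (hε : (Fintype.card ι - m) * R ≤ ε) :
    ∃ J : Finset ι, #J = m ∧ ‖∑ j, y j - ∑ j ∈ J, y j‖ ≤ ε ∧ |∑ j, lam j - ∑ j ∈ J, lam j| ≤ ε := by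
  obtain ⟨J, -, hJ⟩ := exists_subset_card_eq (s := (univ : Finset ι)) (by simpa using hm)
  refine ⟨J, hJ, (norm_sum_sub_sum_le hy J).trans (by rwa [hJ]), ?_⟩
  have := norm_sum_sub_sum_le (y := lam) (fun j => (Real.norm_eq_abs _).trans_le (hlam j)) J
  rw [Real.norm_eq_abs, hJ] at this
  exact this.trans hε

theorem abs_sub_div_mul_lt_of_abs_sub_lt {N m A S ε : ℝ} (hm : 0 < m) (hN : 0 < N)
    (h : |S - m * (A / N)| < m * ε / N) : |A - N / m * S| < ε := by
  have : A - N / m * S = -(N / m) * (S - m * (A / N)) := by field_simp; ring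
  rw [this, abs_mul, abs_neg, abs_of_pos (by positivity)]
  calc N / m * |S - m * (A / N)| < N / m * (m * ε / N) := by gcongr
    _ = ε := by field_simp

theorem exists_card_eq_rescaled_approx {d N m : ℕ} (hd : 1 ≤ d) (hm0 : 0 < m) (hm : m < N)
    {V : Fin N → Fin d → ℝ} {lam : Fin N → ℝ} (hlam : ∀ j, 0 ≤ lam j) {R ε : ℝ} (hε : 0 < ε)
    (hRv : ∀ j, ‖lam j • V j‖ ≤ R) (hRl : ∀ j, |lam j| ≤ R)
    (hE : log (4 * d) - 5 / 16 < (m * ε / N) ^ 2 / (2 * (N - m) ^ 2 * R ^ 2 * serflingSum N m)) :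
    ∃ J : Finset (Fin N), #J = m ∧
      ‖∑ j, lam j • V j - ∑ j ∈ J, (N / m * lam j) • V j‖ < ε ∧
      |∑ j, lam j - ∑ j ∈ J, N / m * lam j| < ε := by
  have hm' : (0 : ℝ) < m := by exact_mod_cast hm0
  have hN : (0 : ℝ) < N := by exact_mod_cast hm0.trans hm
  -- `none` tracks the weight sum, `some k` the `k`-th coordinate
  let c : Option (Fin d) → Fin N → ℝ := fun i j => i.elim (lam j) fun k => (lam j • V j) k
  let a : Option (Fin d) → ℝ := fun i => i.elim 0 fun _ => -R
  have hc : ∀ i, ∀ j ∈ univ, c i j ∈ Set.Icc (a i) R := by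
    rintro (_ | k) j -
    · exact ⟨hlam j, (le_abs_self _).trans (hRl j)⟩
    · exact abs_le.1 ((norm_le_pi_norm (lam j • V j) k).trans (hRv j))
  have hsmall : ∑ i, 2 * exp (-(2 * (m * ε / N) ^ 2 / ((#(univ : Finset (Fin N)) - m) ^ 2 *
      ((R - a i) ^ 2 * serflingSum #(univ : Finset (Fin N)) m)))) < 1 := by
    convert two_mul_exp_neg_add_two_mul_exp_neg_lt_one (by exact_mod_cast hd) hE using 1
    simp only [Fintype.sum_option, a, Option.elim, sum_const, card_univ, Fintype.card_fin,
      nsmul_eq_mul]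
    generalize (N : ℝ) - m = q
    ring_nf
  obtain ⟨T, hT, hdev⟩ := exists_mem_powersetCard_forall_abs_sampleDeviation_lt hc
    (by simpa using hm) (by positivity) hsmall
  simp only [sampleDeviation, card_univ, Fintype.card_fin] at hdev
  refine ⟨T, (mem_powersetCard.1 hT).2, ?_, ?_⟩
  · refine (pi_norm_lt_iff hε).2 fun k => ?_
    simpa [c, Finset.sum_apply, mul_sum, mul_assoc] using
      abs_sub_div_mul_lt_of_abs_sub_lt hm' hN (hdev (some k))
  · simpa [c, mul_sum] using abs_sub_div_mul_lt_of_abs_sub_lt hm' hN (hdev none)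

theorem exists_card_eq_approx {d N m : ℕ} (hd : 1 ≤ d) (hm0 : 0 < m) (hmN : m ≤ N)
    {V : Fin N → Fin d → ℝ} {lam : Fin N → ℝ} (hlam : ∀ j, 0 ≤ lam j) (hsum : ∑ j, lam j = 1)
    {R ε : ℝ} (hε : 0 < ε) (hRv : ∀ j, ‖lam j • V j‖ ≤ R) (hRl : ∀ j, |lam j| ≤ R)
    (hmε : 2 * log (4 * d) * N * R ^ 2 * (N - m) < m * ε ^ 2) :
    ∃ (J : Finset (Fin N)) (μ : Fin N → ℝ), #J = m ∧ (∀ j, 0 ≤ μ j) ∧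
      ‖∑ j, lam j • V j - ∑ j ∈ J, μ j • V j‖ ≤ ε ∧ |∑ j ∈ J, μ j - 1| ≤ ε := by
  have hR : 0 < R := by
    by_contra! h
    have := sum_le_sum fun j (_ : j ∈ univ) => (le_abs_self (lam j)).trans ((hRl j).trans h)
    norm_num [hsum] at this
  have hL : 0 < log (4 * d) := log_pos (by norm_cast; omega)
  have hm : (0 : ℝ) < m := by exact_mod_cast hm0
  have hq : (0 : ℝ) ≤ N - m := sub_nonneg.2 (by exact_mod_cast hmN)
  rcases le_or_gt (((N : ℝ) - m) * m) (2 * log (4 * d) * N) with hqm | hqm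
  · have hqR : (N - m) * R ≤ ε := by
      have h : 2 * log (4 * d) * N * ((N - m) * R) ^ 2 ≤ 2 * log (4 * d) * N * ε ^ 2 := by
        nlinarith [mul_le_mul_of_nonneg_left hmε.le hq,
          mul_le_mul_of_nonneg_right hqm (sq_nonneg ε)]
      have hN : (0 : ℝ) < N := hm.trans_le (by exact_mod_cast hmN)
      exact (pow_le_pow_iff_left₀ (by positivity) hε.le two_ne_zero).1
        (le_of_mul_le_mul_left h (by positivity))
    obtain ⟨J, hJ, hx, hs⟩ := exists_card_eq_norm_sum_sub_sum_le hRv hRl (by simpa using hmN)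
      (by simpa using hqR)
    refine ⟨J, lam, hJ, hlam, hx, ?_⟩
    rwa [hsum, abs_sub_comm] at hs
  · have hmN' : m < N := by
      have : (0 : ℝ) < N - m := by nlinarith [mul_pos hL hm]
      exact_mod_cast sub_pos.1 this
    have hq1 : (m : ℝ) + 1 ≤ N := by exact_mod_cast hmN'
    have hS := (le_div_iff₀ (by nlinarith)).1 (serflingSum_le hmN')
    obtain ⟨J, hJ, hx, hs⟩ := exists_card_eq_rescaled_approx hd hm0 hmN' hlam hε hRv hRl
      (sub_five_div_sixteen_lt hL hR (serflingSum_pos hm0 hmN') (by linarith) hm (by ring) hqm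
        (by linarith) hmε)
    refine ⟨J, fun j => N / m * lam j, hJ, fun j => by have := hlam j; positivity, hx.le, ?_⟩
    rw [hsum, abs_sub_comm] at hs
    exact hs.le

theorem exists_nat_le_one_add_div_and_mul_sub_lt {N : ℕ} (hN : 1 ≤ N) {t : ℝ} (ht : 0 ≤ t) :
    ∃ m : ℕ, 1 ≤ m ∧ m ≤ N ∧ (m : ℝ) ≤ 1 + N * t / (1 + t) ∧ t * (N - m) < m := by
  refine ⟨min N (1 + ⌊N * t / (1 + t)⌋₊), le_min hN le_self_add, min_le_left _ _, ?_, ?_⟩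
  · calc ((min N (1 + ⌊N * t / (1 + t)⌋₊) : ℕ) : ℝ) ≤ (1 + ⌊N * t / (1 + t)⌋₊ : ℕ) := by
          exact_mod_cast min_le_right _ _
      _ ≤ 1 + N * t / (1 + t) := by push_cast; gcongr; exact Nat.floor_le (by positivity)
  · rcases min_choice N (1 + ⌊N * t / (1 + t)⌋₊) with h | h <;> rw [h]
    · simpa using (show (0 : ℝ) < N by exact_mod_cast hN)
    · have := Nat.lt_floor_add_one (N * t / (1 + t))
      rw [div_lt_iff₀ (by positivity)] at this
      push_cast
      linarith

/-- Approximate Carathéodory with high sampling ratio in `ℓ_∞`: if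
`x = ∑_{j=1}^N λⱼ Vⱼ` is a convex combination in `ℝᵈ` (with the sup norm `‖·‖`),
`R = max(maxⱼ ‖λⱼ Vⱼ‖_∞, maxⱼ |λⱼ|)` and `ε > 0`, then there is a subset `J` of size
`1 + N·(2 log(4d)(√N R/ε)²)/(1 + 2 log(4d)(√N R/ε)²)` and nonnegative coefficients
`μⱼ`, `j ∈ J`, with `‖x - ∑_{j∈J} μⱼ Vⱼ‖_∞ ≤ ε` and `|∑_{j∈J} μⱼ - 1| ≤ ε`. -/
theorem approx_caratheodory_high_sampling_ratio (d N : ℕ)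
    (V : Fin N → (Fin d → ℝ)) (lam : Fin N → ℝ)
    (hlam : ∀ j, 0 ≤ lam j) (hsum : ∑ j, lam j = 1)
    (x : Fin d → ℝ) (hx : x = ∑ j, lam j • V j)
    (ε : ℝ) (hε : 0 < ε)
    (R : ℝ) (hRv : ∀ j, ‖lam j • V j‖ ≤ R) (hRl : ∀ j, |lam j| ≤ R) :
    ∃ (J : Finset (Fin N)) (μ : Fin N → ℝ),
      (J.card : ℝ) ≤ 1 + N * (2 * log (4 * d) * (Real.sqrt N * R / ε) ^ 2) /
          (1 + 2 * log (4 * d) * (Real.sqrt N * R / ε) ^ 2) ∧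
      (∀ j, 0 ≤ μ j) ∧
      ‖x - ∑ j ∈ J, μ j • V j‖ ≤ ε ∧
      |(∑ j ∈ J, μ j) - 1| ≤ ε := by
  have hN : 0 < N := Nat.pos_of_ne_zero fun h => by subst h; simp at hsum
  rcases Nat.eq_zero_or_pos d with rfl | hd
  · exact ⟨{⟨0, hN⟩}, 1, by simp, fun _ => zero_le_one, (norm_of_subsingleton _).trans_le hε.le,
      by simp [hε.le]⟩
  obtain ⟨m, hm0, hmN, hm_le, hmε⟩ := exists_nat_le_one_add_div_and_mul_sub_lt hN
    (t := 2 * log (4 * d) * (√N * R / ε) ^ 2)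
    (by have := log_nonneg (show (1 : ℝ) ≤ 4 * d by norm_cast; omega); positivity)
  rw [div_pow, mul_pow, sq_sqrt N.cast_nonneg, ← mul_div_assoc, div_mul_eq_mul_div,
    div_lt_iff₀ (by positivity), ← mul_assoc] at hmε
  obtain ⟨J, μ, hJ, hμ, hJx, hJμ⟩ := exists_card_eq_approx hd hm0 hmN hlam hsum hε hRv hRl hmε
  exact ⟨J, μ, hJ ▸ hm_le, hμ, hx ▸ hJx, hJμ⟩
end

section
/- (Forward martingale for sampling without replacement) Let v_1,...,v_N be vectors in a Banach space with average vbar, let V_1,...,V_m be obtained by uniform sampling without replacement from {v_1,...,v_N} with m <= N-1, and define M_k = (1/(N-k)) sum_{i=1}^k (V_i - vbar) for 1 <= k <= m and M_k = M_m for k > m. Then (M_k) is a martingale with respect to the filtration F_k = sigma(V_1,...,V_{min(k,m)}). -/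
/-!
Right multiplication by the transposition of two unobserved positions `a, b` preserves the
uniform measure on permutations and fixes every event generated by the observed samples, so
`v (ω a)` and `v (ω b)` have the same conditional expectation given the past. Averaging over
the `N - k` unobserved positions, `E[V_{k+1} | F_k] = (N • v̄ - (V_1 + ⋯ + V_k)) / (N - k)`, and
`M_{k+1} - M_k = (V_{k+1} - E[V_{k+1} | F_k]) / (N - k - 1)` has zero conditional expectation.
-/

open MeasureTheory Finset
open MeasurableSpace (comap invariants invariants_le)

theorem stronglyMeasurable_of_comap_le {Ω β : Type*} [Finite Ω] [TopologicalSpace β]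
    {m : MeasurableSpace Ω} {f : Ω → β} (hf : comap f ⊤ ≤ m) : StronglyMeasurable[m] f :=
  (@SimpleFunc.mk Ω m β f (fun b => hf _ ⟨{b}, trivial, rfl⟩)
    (Set.finite_range f)).stronglyMeasurable

theorem PMF.measurePreserving_uniformOfFintype {α : Type*} [Fintype α] [Nonempty α]
    [MeasurableSpace α] [MeasurableSingletonClass α] (e : α ≃ᵐ α) :
    MeasurePreserving e (uniformOfFintype α).toMeasure (uniformOfFintype α).toMeasure := by
  refine ⟨e.measurable, Measure.ext fun s hs => ?_⟩
  rw [e.map_apply, toMeasure_apply_fintype, toMeasure_apply_fintype]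
  exact Fintype.sum_equiv e _ _ fun x => by by_cases hx : e x ∈ s <;> simp [hx]

theorem condExp_comp_eq_of_le_invariants {Ω E : Type*} [NormedAddCommGroup E]
    [NormedSpace ℝ E] [CompleteSpace E] {m m₀ : MeasurableSpace Ω} {μ : Measure[m₀] Ω}
    [IsFiniteMeasure μ] {T : Ω ≃ᵐ Ω} (hT : MeasurePreserving T μ μ) (hm : m ≤ invariants T)
    {f : Ω → E} (hf : Integrable f μ) : μ[f ∘ T|m] =ᵐ[μ] μ[f|m] := by
  have hm₀ : m ≤ m₀ := hm.trans (invariants_le T)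
  refine (ae_eq_condExp_of_forall_setIntegral_eq hm₀
    ((hT.integrable_comp_emb T.measurableEmbedding).mpr hf)
    (fun s _ _ => integrable_condExp.integrableOn) (fun s hs _ => ?_)
    stronglyMeasurable_condExp.aestronglyMeasurable).symm
  calc ∫ x in s, μ[f|m] x ∂μ = ∫ x in s, f x ∂μ := setIntegral_condExp hm₀ hf hs
    _ = ∫ x in T ⁻¹' s, f (T x) ∂μ :=
      (hT.setIntegral_preimage_emb T.measurableEmbedding f s).symm
    _ = ∫ x in s, (f ∘ T) x ∂μ := by rw [(hm _ hs).2]; rfl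

theorem condExp_smul_sub_eq_zero_of_condExp_eq {Ω E : Type*} [NormedAddCommGroup E]
    [NormedSpace ℝ E] [CompleteSpace E] {m m₀ : MeasurableSpace Ω} {μ : Measure[m₀] Ω}
    [IsFiniteMeasure μ] (hm : m ≤ m₀) {f g : Ω → E} (hf : Integrable f μ)
    (hg : StronglyMeasurable[m] g) (hgi : Integrable g μ) (hfg : μ[f|m] =ᵐ[μ] g) (c : ℝ) :
    μ[c • (f - g)|m] =ᵐ[μ] 0 := by
  filter_upwards [condExp_smul c (f - g) m, condExp_sub hf hgi m, hfg] with ω h1 h2 h3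
  rw [h1, Pi.smul_apply, h2, Pi.sub_apply, h3, condExp_of_stronglyMeasurable hm hg hgi,
    sub_self, smul_zero, Pi.zero_apply]

theorem inv_smul_add_sub_inv_smul_eq {E : Type*} [AddCommGroup E] [Module ℝ E] {N n : ℝ}
    (h₀ : N - n ≠ 0) (h₁ : N - (n + 1) ≠ 0) (x S vbar : E) :
    (N - (n + 1))⁻¹ • ((x - vbar) + (S - n • vbar)) - (N - n)⁻¹ • (S - n • vbar) =
      (N - (n + 1))⁻¹ • (x - (N - n)⁻¹ • (N • vbar - S)) := by
  match_scalars <;> field_simp <;> ring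

section Sampling

open Equiv

variable {N : ℕ} {ι β : Type*}

abbrev sampleSigma (v : Fin N → β) (pos : ι → Fin N) (I : Finset ι) :
    MeasurableSpace (Perm (Fin N)) :=
  ⨆ i ∈ I, comap (fun ω : Perm (Fin N) => v (ω (pos i))) ⊤

theorem stronglyMeasurable_sample [TopologicalSpace β] (v : Fin N → β) (pos : ι → Fin N)
    {I : Finset ι} {i : ι} (hi : i ∈ I) :
    StronglyMeasurable[sampleSigma v pos I] fun ω : Perm (Fin N) => v (ω (pos i)) :=
  stronglyMeasurable_of_comap_le (le_iSup₂ (f := fun j (_ : j ∈ I) =>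
    comap (fun ω : Perm (Fin N) => v (ω (pos j))) ⊤) i hi)

theorem sum_sample_compl_image [AddCommGroup β] (v : Fin N → β) {pos : ι → Fin N}
    (hpos : Function.Injective pos) (I : Finset ι) (ω : Perm (Fin N)) :
    ∑ b ∈ (I.image pos)ᶜ, v (ω b) = ∑ j, v j - ∑ i ∈ I, v (ω (pos i)) := by
  rw [eq_sub_iff_add_eq, ← sum_image hpos.injOn (f := fun b => v (ω b)), sum_compl_add_sum,
    Equiv.sum_comp ω v]

variable {B : Type*} [NormedAddCommGroup B]

theorem stronglyMeasurable_sum_sub_sum_sample (v : Fin N → B) (pos : ι → Fin N)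
    (I : Finset ι) :
    StronglyMeasurable[sampleSigma v pos I]
      fun ω : Perm (Fin N) => ∑ j, v j - ∑ i ∈ I, v (ω (pos i)) :=
  stronglyMeasurable_const.sub (Finset.stronglyMeasurable_fun_sum _ fun _ hi =>
    stronglyMeasurable_sample v pos hi)

variable [MeasurableSpace (Perm (Fin N))] [DiscreteMeasurableSpace (Perm (Fin N))]

theorem sampleSigma_le_invariants_mulRight_swap (v : Fin N → β) (pos : ι → Fin N)
    (I : Finset ι) {a b : Fin N} (ha : a ∉ I.image pos) (hb : b ∉ I.image pos) :
    sampleSigma v pos I ≤ invariants (· * swap a b) := by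
  refine iSup₂_le fun i hi => ?_
  rintro _ ⟨t, -, rfl⟩
  refine ⟨.of_discrete, Set.ext fun ω => ?_⟩
  have ha' : pos i ≠ a := fun h => ha (mem_image.mpr ⟨i, hi, h⟩)
  have hb' : pos i ≠ b := fun h => hb (mem_image.mpr ⟨i, hi, h⟩)
  simp [swap_apply_of_ne_of_ne ha' hb']

variable [NormedSpace ℝ B] [CompleteSpace B]

theorem condExp_sample_eq_of_notMem_image (v : Fin N → B) (pos : ι → Fin N) (I : Finset ι)
    {a b : Fin N} (ha : a ∉ I.image pos) (hb : b ∉ I.image pos) :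
    (PMF.uniformOfFintype (Perm (Fin N))).toMeasure[fun ω => v (ω a)|sampleSigma v pos I]
      =ᵐ[(PMF.uniformOfFintype (Perm (Fin N))).toMeasure]
    (PMF.uniformOfFintype (Perm (Fin N))).toMeasure[fun ω => v (ω b)|sampleSigma v pos I] :=
  (condExp_comp_eq_of_le_invariants
    (PMF.measurePreserving_uniformOfFintype (MeasurableEquiv.mulRight (swap a b)))
    (sampleSigma_le_invariants_mulRight_swap v pos I ha hb)
    (f := fun ω => v (ω a)) .of_finite).symm.trans (by simp [Function.comp_def])


theorem condExp_sample_eq_average_unobserved (v : Fin N → B) {pos : ι → Fin N}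
    (hpos : Function.Injective pos) (I : Finset ι) {a : Fin N} (ha : a ∉ I.image pos) :
    (PMF.uniformOfFintype (Perm (Fin N))).toMeasure[fun ω => v (ω a)|sampleSigma v pos I]
      =ᵐ[(PMF.uniformOfFintype (Perm (Fin N))).toMeasure]
    fun ω => ((N : ℝ) - #I)⁻¹ • (∑ j, v j - ∑ i ∈ I, v (ω (pos i))) := by
  set μ := (PMF.uniformOfFintype (Perm (Fin N))).toMeasure
  set J := (I.image pos)ᶜ
  set g : Perm (Fin N) → B := fun ω => ∑ j, v j - ∑ i ∈ I, v (ω (pos i))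
  have hcard : #(I.image pos) = #I := card_image_of_injective I hpos
  have hJ : (#J : ℝ) = N - #I := by
    rw [card_compl, hcard, Fintype.card_fin,
      Nat.cast_sub (hcard ▸ (card_le_univ _).trans_eq (Fintype.card_fin N))]
  have hJ0 : (#J : ℝ) ≠ 0 := Nat.cast_ne_zero.mpr (card_pos.mpr ⟨a, mem_compl.mpr ha⟩).ne'
  have hexch : ∀ᵐ ω ∂μ, ∀ b ∈ J, μ[fun ω => v (ω b)|sampleSigma v pos I] ω =
      μ[fun ω => v (ω a)|sampleSigma v pos I] ω :=
    (Finset.eventually_all J).mpr fun b hb =>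
      condExp_sample_eq_of_notMem_image v pos I (mem_compl.mp hb) ha
  have hsum : g =ᵐ[μ] ∑ b ∈ J, μ[fun ω => v (ω b)|sampleSigma v pos I] := by
    have hg : ∑ b ∈ J, (fun ω : Perm (Fin N) => v (ω b)) = g :=
      funext fun ω => by simp only [Finset.sum_apply, J, g, sum_sample_compl_image v hpos]
    have hgσ : μ[g|sampleSigma v pos I] = g := condExp_of_stronglyMeasurable
      (fun _ _ => .of_discrete) (stronglyMeasurable_sum_sub_sum_sample v pos I) .of_finite
    rw [← hgσ, ← hg]
    exact condExp_finsetSum (fun _ _ => .of_finite) _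
  filter_upwards [hexch, hsum] with ω hω hsumω
  change _ = _ • g ω
  rw [hsumω, Finset.sum_apply, sum_congr rfl hω, sum_const, ← Nat.cast_smul_eq_nsmul ℝ, ← hJ,
    smul_smul, inv_mul_cancel₀ hJ0, one_smul]

end Sampling

section SamplingMartingale

open Equiv

variable {N m : ℕ} {B : Type*} [NormedAddCommGroup B] [NormedSpace ℝ B]

noncomputable def samplingMartingale (v : Fin N → B) (vbar : B) (pos : Fin m → Fin N) (k : ℕ)
    (ω : Perm (Fin N)) : B :=
  ((N : ℝ) - (min k m : ℕ))⁻¹ •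
    ∑ i ∈ univ.filter (fun i : Fin m => (i : ℕ) < k), (v (ω (pos i)) - vbar)

variable (v : Fin N → B) (vbar : B) (pos : Fin m → Fin N)

theorem stronglyMeasurable_samplingMartingale (k : ℕ) :
    StronglyMeasurable[sampleSigma v pos (univ.filter fun i : Fin m => (i : ℕ) < k)]
      (samplingMartingale v vbar pos k) :=
  (Finset.stronglyMeasurable_fun_sum _ fun _ hi =>
    (stronglyMeasurable_sample v pos hi).sub stronglyMeasurable_const).const_smul _

theorem samplingMartingale_succ_of_le {n : ℕ} (hmn : m ≤ n) :
    samplingMartingale v vbar pos (n + 1) = samplingMartingale v vbar pos n := by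
  have hI : univ.filter (fun i : Fin m => (i : ℕ) < n + 1) =
      univ.filter (fun i : Fin m => (i : ℕ) < n) := by
    ext i; simp; omega
  funext ω
  simp only [samplingMartingale, hI, min_eq_right hmn, min_eq_right (hmn.trans n.le_succ)]

theorem samplingMartingale_succ_sub {n : ℕ} (hnm : n < m) (hmN : m < N)
    (hvbar : vbar = (N : ℝ)⁻¹ • ∑ j, v j) :
    samplingMartingale v vbar pos (n + 1) - samplingMartingale v vbar pos n =
      ((N : ℝ) - (n + 1))⁻¹ • ((fun ω => v (ω (pos ⟨n, hnm⟩))) - fun ω =>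
        ((N : ℝ) - #(univ.filter fun i : Fin m => (i : ℕ) < n))⁻¹ •
          (∑ j, v j - ∑ i ∈ univ.filter (fun i : Fin m => (i : ℕ) < n), v (ω (pos i)))) := by
  set I := univ.filter fun i : Fin m => (i : ℕ) < n
  have hIsucc : univ.filter (fun i : Fin m => (i : ℕ) < n + 1) = insert ⟨n, hnm⟩ I := by
    ext i; simp [I, Fin.ext_iff]; omega
  have hIcard : #I = n := by simp [I, Fin.card_filter_val_lt]; omega
  have hnN : (n : ℝ) + 1 < N := by exact_mod_cast (by omega : n + 1 < N)
  have hN : (N : ℝ) ≠ 0 := by exact_mod_cast (by omega : N ≠ 0)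
  have hw : ∑ j, v j = (N : ℝ) • vbar := by rw [hvbar, smul_inv_smul₀ hN]
  ext ω
  simp only [samplingMartingale, Pi.sub_apply, Pi.smul_apply, hIsucc]
  rw [sum_insert (by simp [I]), sum_sub_distrib, sum_const, hIcard, min_eq_left hnm,
    min_eq_left hnm.le, ← Nat.cast_smul_eq_nsmul ℝ, hw]
  push_cast
  exact inv_smul_add_sub_inv_smul_eq (by linarith) (by linarith) _ _ _

end SamplingMartingale

/-- Forward martingale for sampling without replacement: sampling `m ≤ N - 1` of the
vectors `v₁,…,v_N` (with average `v̄`) uniformly without replacement — modelled by a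
uniform random permutation `ω` of `{1,…,N}` with `V_i = v_{ω(i)}` — the process
`M_k = (1/(N-k)) ∑_{i≤k} (V_i - v̄)` for `k ≤ m`, `M_k = M_m` for `k > m`, is a
martingale for the filtration `F_k = σ(V_1,…,V_{min(k,m)})`. -/
theorem forward_martingale_sampling_without_replacement (N m : ℕ) (hm : m + 1 ≤ N)
    {B : Type*} [NormedAddCommGroup B] [NormedSpace ℝ B] [CompleteSpace B]
    (v : Fin N → B) (vbar : B) (hvbar : vbar = (N : ℝ)⁻¹ • ∑ j, v j)
    (inst : MeasurableSpace (Equiv.Perm (Fin N))) (hinst : inst = ⊤)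
    (ℱ : Filtration ℕ inst)
    (hℱ : ∀ k : ℕ, ℱ k =
      ⨆ i ∈ Finset.univ.filter (fun i : Fin m => (i : ℕ) < k),
        MeasurableSpace.comap
          (fun ω : Equiv.Perm (Fin N) => v (ω (Fin.castLE (Nat.le_of_succ_le hm) i))) ⊤)
    (M : ℕ → Equiv.Perm (Fin N) → B)
    (hM : ∀ (k : ℕ) (ω : Equiv.Perm (Fin N)), M k ω =
      ((N : ℝ) - (min k m : ℕ))⁻¹ •
        ∑ i ∈ Finset.univ.filter (fun i : Fin m => (i : ℕ) < k),
          (v (ω (Fin.castLE (Nat.le_of_succ_le hm) i)) - vbar)) :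
    Martingale M ℱ ((PMF.uniformOfFintype (Equiv.Perm (Fin N))).toMeasure) := by
  have : DiscreteMeasurableSpace (Equiv.Perm (Fin N)) := hinst ▸ inferInstance
  obtain rfl : M = samplingMartingale v vbar (Fin.castLE (Nat.le_of_succ_le hm)) := funext₂ hM
  refine martingale_of_condExp_sub_eq_zero_nat (fun k => ?_) (fun _ => .of_finite) fun n => ?_
  · rw [hℱ k]
    exact stronglyMeasurable_samplingMartingale _ _ _ k
  rcases le_or_gt m n with hmn | hnm
  · simp [samplingMartingale_succ_of_le _ _ _ hmn]
  rw [samplingMartingale_succ_sub _ _ _ hnm hm hvbar, hℱ n]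
  exact condExp_smul_sub_eq_zero_of_condExp_eq (fun _ _ => .of_discrete) .of_finite
    ((stronglyMeasurable_sum_sub_sum_sample _ _ _).const_smul _) .of_finite
    (condExp_sample_eq_average_unobserved v (Fin.castLE_injective _) _
      (by simp [Fin.ext_iff]; omega)) _
end

section
/- (Extended formulation gives same constraint set cardinality reduction) If P = {x in R^d : Ax <= b} is a polytope with vertices v_1,...,v_p and slack matrix S given by S_{ij} = b_i - (A v_j)_i, then P admits an extended formulation {x : Ax + Fy = b, y >= 0} with F in R_+^{m x q} and nonnegative V in R_+^{q x p} if and only if S factors as S = F V; consequently the minimal extension size equals the nonnegative rank of S. -/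
open Matrix

/-!
An extended formulation `Ax + Fy = b, y ≥ 0` with `F ≥ 0` always lies inside `P = {Ax ≤ b}`, and it
is convex, so it equals `P = conv {v_j}` exactly when it contains every vertex. A vertex `v_j`
belongs to it exactly when the `j`-th column `b - A v_j` of the slack matrix is `F y_j` for some
`y_j ≥ 0`, and these witnesses are the columns of a nonnegative `V` with `S = F V`.
-/

variable {𝕜 ι κ n α : Type*} [Field 𝕜] [LinearOrder 𝕜] [IsStrictOrderedRing 𝕜]
  [Fintype κ] [Fintype n]

def polyhedron (A : Matrix ι n 𝕜) (b : ι → 𝕜) : Set (n → 𝕜) :=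
  {x | ∀ i, (A *ᵥ x) i ≤ b i}

def extendedFormulation (A : Matrix ι n 𝕜) (F : Matrix ι κ 𝕜) (b : ι → 𝕜) : Set (n → 𝕜) :=
  {x | ∃ y : κ → 𝕜, A *ᵥ x + F *ᵥ y = b ∧ ∀ k, 0 ≤ y k}

theorem mulVec_nonneg {F : Matrix ι κ 𝕜} (hF : ∀ i k, 0 ≤ F i k) {y : κ → 𝕜}
    (hy : ∀ k, 0 ≤ y k) (i : ι) : 0 ≤ (F *ᵥ y) i :=
  Finset.sum_nonneg fun k _ => mul_nonneg (hF i k) (hy k)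

theorem extendedFormulation_subset_polyhedron (A : Matrix ι n 𝕜) {F : Matrix ι κ 𝕜}
    (hF : ∀ i k, 0 ≤ F i k) (b : ι → 𝕜) : extendedFormulation A F b ⊆ polyhedron A b := by
  rintro x ⟨y, hxy, hy⟩ i
  have hi := congrFun hxy i
  simp only [Pi.add_apply] at hi
  linarith [mulVec_nonneg hF hy i]

theorem convex_extendedFormulation (A : Matrix ι n 𝕜) (F : Matrix ι κ 𝕜) (b : ι → 𝕜) :
    Convex 𝕜 (extendedFormulation A F b) := by
  rintro x₁ ⟨y₁, hxy₁, hy₁⟩ x₂ ⟨y₂, hxy₂, hy₂⟩ s t hs ht hst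
  refine ⟨s • y₁ + t • y₂, ?_, fun k => ?_⟩
  · calc A *ᵥ (s • x₁ + t • x₂) + F *ᵥ (s • y₁ + t • y₂)
          = s • (A *ᵥ x₁ + F *ᵥ y₁) + t • (A *ᵥ x₂ + F *ᵥ y₂) := by
            simp only [mulVec_add, mulVec_smul, smul_add]
            abel
        _ = b := by rw [hxy₁, hxy₂, ← add_smul, hst, one_smul]
  · simp only [Pi.add_apply, Pi.smul_apply, smul_eq_mul]
    exact add_nonneg (mul_nonneg hs (hy₁ k)) (mul_nonneg ht (hy₂ k))

theorem exists_nonneg_factorization_iff_forall_mem_extendedFormulation [Fintype α]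
    {A : Matrix ι n 𝕜} {F : Matrix ι κ 𝕜} {b : ι → 𝕜} {v : α → n → 𝕜} {S : Matrix ι α 𝕜}
    (hS : ∀ i j, S i j = b i - (A *ᵥ v j) i) :
    (∃ V : Matrix κ α 𝕜, (∀ k j, 0 ≤ V k j) ∧ S = F * V) ↔
      ∀ j, v j ∈ extendedFormulation A F b := by
  have column_eq : ∀ (y : κ → 𝕜) j, A *ᵥ v j + F *ᵥ y = b ↔ ∀ i, S i j = (F *ᵥ y) i := by
    refine fun y j => funext_iff.trans (forall_congr' fun i => ?_)
    rw [hS, Pi.add_apply]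
    constructor <;> intro h <;> linarith
  constructor
  · rintro ⟨V, hV, rfl⟩ j
    exact ⟨fun k => V k j, (column_eq _ j).mpr fun i => rfl, fun k => hV k j⟩
  · intro hv
    choose y hy hy0 using hv
    exact ⟨fun k j => y j k, fun k j => hy0 j k, ext fun i j => (column_eq (y j) j).mp (hy j) i⟩

theorem extendedFormulation_eq_polyhedron_iff {A : Matrix ι n 𝕜} {F : Matrix ι κ 𝕜}
    {b : ι → 𝕜} {v : α → n → 𝕜} (hP : polyhedron A b = convexHull 𝕜 (Set.range v))
    (hF : ∀ i k, 0 ≤ F i k) :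
    extendedFormulation A F b = polyhedron A b ↔ ∀ j, v j ∈ extendedFormulation A F b := by
  constructor
  · intro h j
    rw [h, hP]
    exact subset_convexHull 𝕜 _ ⟨j, rfl⟩
  · intro hv
    refine (extendedFormulation_subset_polyhedron A hF b).antisymm ?_
    rw [hP]
    exact convexHull_min (Set.range_subset_iff.mpr hv) (convex_extendedFormulation A F b)

theorem yannakakis_general (d m p : ℕ)
    (A : Matrix (Fin m) (Fin d) ℝ) (b : Fin m → ℝ) (v : Fin p → (Fin d → ℝ))
    (hP : {x : Fin d → ℝ | ∀ i, (A *ᵥ x) i ≤ b i} = convexHull ℝ (Set.range v))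
    (S : Matrix (Fin m) (Fin p) ℝ) (hS : ∀ i j, S i j = b i - (A *ᵥ v j) i) :
    (∀ (q : ℕ) (F : Matrix (Fin m) (Fin q) ℝ), (∀ i j, 0 ≤ F i j) →
      ({x : Fin d → ℝ | ∃ y : Fin q → ℝ, A *ᵥ x + F *ᵥ y = b ∧ ∀ j, 0 ≤ y j} =
          {x : Fin d → ℝ | ∀ i, (A *ᵥ x) i ≤ b i} ↔
        ∃ V : Matrix (Fin q) (Fin p) ℝ, (∀ i j, 0 ≤ V i j) ∧ S = F * V)) ∧
    sInf {q : ℕ | ∃ F : Matrix (Fin m) (Fin q) ℝ, (∀ i j, 0 ≤ F i j) ∧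
        {x : Fin d → ℝ | ∃ y : Fin q → ℝ, A *ᵥ x + F *ᵥ y = b ∧ ∀ j, 0 ≤ y j} =
          {x : Fin d → ℝ | ∀ i, (A *ᵥ x) i ≤ b i}} =
      sInf {q : ℕ | ∃ (F : Matrix (Fin m) (Fin q) ℝ) (V : Matrix (Fin q) (Fin p) ℝ),
        (∀ i j, 0 ≤ F i j) ∧ (∀ i j, 0 ≤ V i j) ∧ S = F * V} := by
  have key : ∀ (q : ℕ) (F : Matrix (Fin m) (Fin q) ℝ), (∀ i j, 0 ≤ F i j) →
      (extendedFormulation A F b = polyhedron A b ↔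
        ∃ V : Matrix (Fin q) (Fin p) ℝ, (∀ i j, 0 ≤ V i j) ∧ S = F * V) := fun q F hF =>
    (extendedFormulation_eq_polyhedron_iff hP hF).trans
      (exists_nonneg_factorization_iff_forall_mem_extendedFormulation hS).symm
  refine ⟨key, congrArg sInf (Set.ext fun q => ⟨?_, ?_⟩)⟩
  · rintro ⟨F, hF, hFP⟩
    obtain ⟨V, hV, hSFV⟩ := (key q F hF).mp hFP
    exact ⟨F, V, hF, hV, hSFV⟩
  · rintro ⟨F, V, hF, hV, hSFV⟩
    exact ⟨F, hF, (key q F hF).mpr ⟨V, hV, hSFV⟩⟩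

/-- Yannakakis's theorem: for a polytope `P = {x : Ax ≤ b}` with vertex set
`{v₁,…,v_p}` and slack matrix `S`, `S_{ij} = b_i - (A v_j)_i`, a nonnegative matrix
`F` yields an extended formulation `{x : ∃ y ≥ 0, Ax + Fy = b} = P` if and only if `S`
factors as `S = F V` with `V` nonnegative; consequently the minimal extension size
equals the nonnegative rank of `S`. -/
theorem yannakakis (d m p : ℕ)
    (A : Matrix (Fin m) (Fin d) ℝ) (b : Fin m → ℝ) (v : Fin p → (Fin d → ℝ))
    (hcompact : IsCompact {x : Fin d → ℝ | ∀ i, (A *ᵥ x) i ≤ b i})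
    (hP : {x : Fin d → ℝ | ∀ i, (A *ᵥ x) i ≤ b i} = convexHull ℝ (Set.range v))
    (hvert : ∀ j, v j ∈ Set.extremePoints ℝ {x : Fin d → ℝ | ∀ i, (A *ᵥ x) i ≤ b i})
    (S : Matrix (Fin m) (Fin p) ℝ) (hS : ∀ i j, S i j = b i - (A *ᵥ v j) i) :
    (∀ (q : ℕ) (F : Matrix (Fin m) (Fin q) ℝ), (∀ i j, 0 ≤ F i j) →
      ({x : Fin d → ℝ | ∃ y : Fin q → ℝ, A *ᵥ x + F *ᵥ y = b ∧ ∀ j, 0 ≤ y j} =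
          {x : Fin d → ℝ | ∀ i, (A *ᵥ x) i ≤ b i} ↔
        ∃ V : Matrix (Fin q) (Fin p) ℝ, (∀ i j, 0 ≤ V i j) ∧ S = F * V)) ∧
    sInf {q : ℕ | ∃ F : Matrix (Fin m) (Fin q) ℝ, (∀ i j, 0 ≤ F i j) ∧
        {x : Fin d → ℝ | ∃ y : Fin q → ℝ, A *ᵥ x + F *ᵥ y = b ∧ ∀ j, 0 ≤ y j} =
          {x : Fin d → ℝ | ∀ i, (A *ᵥ x) i ≤ b i}} =
      sInf {q : ℕ | ∃ (F : Matrix (Fin m) (Fin q) ℝ) (V : Matrix (Fin q) (Fin p) ℝ),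
        (∀ i j, 0 ≤ F i j) ∧ (∀ i j, 0 ≤ V i j) ∧ S = F * V} :=
  yannakakis_general d m p A b v hP S hS
end
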